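/- arXiv:2309.07023 — 7 statements merged into one kernel-verified Lean document; each statement's English description precedes it below -/
import Mathlib

section
/- Let M > 1 and μ ≥ max(1/(M−1), 3M/(2√(M²−1))). Define δ* := (√(μ²(M²−1)+1) − M)/(μ²−1). Then 0 < δ* < M−1, and (δ*)^{-1} (M − δ* + √((M−δ*)² − 1))^{-μ} ≤ e · (δ*)^{-1} (M + √(M²−1))^{-μ}; in particular, the infimum over δ ∈ (0, M−1) of δ^{-1}(M−δ+√((M−δ)²−1))^{-μ} is at most e(δ*)^{-1}(M+√(M²−1))^{-μ}. -/
set_option maxHeartbeats 1000000 in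
/-- Removing the shift `δ` from the exponential rate at the cost of a factor `e`. -/
theorem remove_delta_from_rate (M μ : ℝ) (hM : 1 < M)
    (hμ : max (1 / (M - 1)) (3 * M / (2 * Real.sqrt (M ^ 2 - 1))) ≤ μ)
    (δ : ℝ) (hδdef : δ = (Real.sqrt (μ ^ 2 * (M ^ 2 - 1) + 1) - M) / (μ ^ 2 - 1)) :
    0 < δ ∧ δ < M - 1 ∧
      δ⁻¹ * (M - δ + Real.sqrt ((M - δ) ^ 2 - 1)) ^ (-μ) ≤
        Real.exp 1 * δ⁻¹ * (M + Real.sqrt (M ^ 2 - 1)) ^ (-μ) ∧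
      sInf ((fun d : ℝ => d⁻¹ * (M - d + Real.sqrt ((M - d) ^ 2 - 1)) ^ (-μ)) ''
          Set.Ioo 0 (M - 1)) ≤
        Real.exp 1 * δ⁻¹ * (M + Real.sqrt (M ^ 2 - 1)) ^ (-μ) := by
  set r := Real.sqrt (M ^ 2 - 1) with hrdef
  set s := Real.sqrt (μ ^ 2 * (M ^ 2 - 1) + 1) with hsdef
  have hM2 : (0:ℝ) < M ^ 2 - 1 := by nlinarith
  have hr2 : r ^ 2 = M ^ 2 - 1 := Real.sq_sqrt hM2.le
  have hr0 : 0 < r := Real.sqrt_pos.mpr hM2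
  have hrM : r < M := by nlinarith [hr2, hr0]
  -- μ > 3/2
  have hμ2 : 3 * M / (2 * r) ≤ μ := le_trans (le_max_right _ _) hμ
  have hμ1 : 1 < μ := by
    have : 3 * M / (2 * r) > 1 := by
      rw [gt_iff_lt, lt_div_iff₀ (by positivity)]
      nlinarith
    linarith
  have hs2 : s ^ 2 = μ ^ 2 * (M ^ 2 - 1) + 1 := Real.sq_sqrt (by positivity)
  have hs0 : 0 < s := Real.sqrt_pos.mpr (by positivity)
  have hs1 : 1 < s := by
    have hμ0 : (0:ℝ) < μ := by linarith
    have h : 1 < s ^ 2 := by nlinarith [mul_pos (mul_pos hμ0 hμ0) hM2]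
    nlinarith [hs0]
  have hsμr : μ * r ≤ s := by nlinarith [hs2, hr2, hs0]
  have hsM : 0 < s + M := by linarith
  -- rewrite δ
  have hδ : δ = (M ^ 2 - 1) / (s + M) := by
    rw [hδdef]
    rw [div_eq_div_iff (by nlinarith : (0:ℝ) < μ ^ 2 - 1).ne' hsM.ne']
    nlinarith [hs2]
  have hδ0 : 0 < δ := by rw [hδ]; positivity
  have hδM : δ < M - 1 := by
    rw [hδ, div_lt_iff₀ hsM]; nlinarith
  refine ⟨hδ0, hδM, ?_⟩
  have hx1 : 1 < M - δ := by linarith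
  -- sqrt computation
  have hsq : Real.sqrt ((M - δ) ^ 2 - 1) = μ * (M ^ 2 - 1) / (s + M) := by
    rw [show (M - δ) ^ 2 - 1 = (μ * (M ^ 2 - 1) / (s + M)) ^ 2 by
      rw [hδ]; field_simp; nlinarith [hs2]]
    exact Real.sqrt_sq (by positivity)
  have hA : M - δ + Real.sqrt ((M - δ) ^ 2 - 1)
      = (M * s + 1 + μ * (M ^ 2 - 1)) / (s + M) := by
    rw [hsq, hδ]; field_simp; ring
  have hB0 : 0 < M + r := by linarith
  have hC0 : 0 < μ / (μ + 1) := by positivity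
  -- key lower bound
  have hkey : (M + r) * (μ / (μ + 1)) ≤ M - δ + Real.sqrt ((M - δ) ^ 2 - 1) := by
    rw [hA, ← mul_div_assoc, div_le_div_iff₀ (by linarith) hsM]
    have heq : (M * s + 1 + μ * (M ^ 2 - 1)) * (μ + 1) - (M + r) * μ * (s + M)
        = (s - μ * r) * (s + M) := by linear_combination -hs2
    nlinarith [mul_nonneg (sub_nonneg.mpr hsμr) hsM.le, heq]
  have hApos : 0 < M - δ + Real.sqrt ((M - δ) ^ 2 - 1) := lt_of_lt_of_le (by positivity) hkey
  -- (μ/(μ+1))^(-μ) ≤ e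
  have hCμ : (μ / (μ + 1)) ^ (-μ) ≤ Real.exp 1 := by
    rw [Real.rpow_neg hC0.le, ← Real.inv_rpow hC0.le]
    have hinv : (μ / (μ + 1))⁻¹ = 1 + 1/μ := by
      rw [inv_div]; field_simp
    rw [hinv]
    have h1 : 1 + 1/μ ≤ Real.exp (1/μ) := by
      have := Real.add_one_le_exp (1/μ); linarith
    calc (1 + 1/μ) ^ μ ≤ (Real.exp (1/μ)) ^ μ :=
          Real.rpow_le_rpow (by positivity) h1 (by linarith)
      _ = Real.exp 1 := by
          rw [← Real.exp_mul, one_div, inv_mul_cancel₀ (by linarith)]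
  -- main inequality
  have hmain : δ⁻¹ * (M - δ + Real.sqrt ((M - δ) ^ 2 - 1)) ^ (-μ) ≤
      Real.exp 1 * δ⁻¹ * (M + r) ^ (-μ) := by
    have h1 : (M - δ + Real.sqrt ((M - δ) ^ 2 - 1)) ^ (-μ) ≤
        ((M + r) * (μ / (μ + 1))) ^ (-μ) := by
      apply Real.rpow_le_rpow_of_nonpos (by positivity) hkey (by linarith)
    have h2 : ((M + r) * (μ / (μ + 1))) ^ (-μ)
        = (M + r) ^ (-μ) * (μ / (μ + 1)) ^ (-μ) :=
      Real.mul_rpow hB0.le hC0.le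
    have h3 : (M + r) ^ (-μ) * (μ / (μ + 1)) ^ (-μ) ≤ (M + r) ^ (-μ) * Real.exp 1 :=
      mul_le_mul_of_nonneg_left hCμ (Real.rpow_nonneg hB0.le _)
    calc δ⁻¹ * (M - δ + Real.sqrt ((M - δ) ^ 2 - 1)) ^ (-μ)
        ≤ δ⁻¹ * ((M + r) ^ (-μ) * Real.exp 1) := by
          apply mul_le_mul_of_nonneg_left _ (inv_nonneg.mpr hδ0.le)
          exact le_trans h1 (h2 ▸ h3)
      _ = Real.exp 1 * δ⁻¹ * (M + r) ^ (-μ) := by ring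
  refine ⟨hmain, ?_⟩
  have hmem : δ⁻¹ * (M - δ + Real.sqrt ((M - δ) ^ 2 - 1)) ^ (-μ) ∈
      ((fun d : ℝ => d⁻¹ * (M - d + Real.sqrt ((M - d) ^ 2 - 1)) ^ (-μ)) ''
        Set.Ioo 0 (M - 1)) := ⟨δ, ⟨hδ0, hδM⟩, rfl⟩
  have hbdd : BddBelow ((fun d : ℝ => d⁻¹ * (M - d + Real.sqrt ((M - d) ^ 2 - 1)) ^ (-μ)) ''
      Set.Ioo 0 (M - 1)) := by
    refine ⟨0, ?_⟩
    rintro x ⟨d, ⟨hd0, hd1⟩, rfl⟩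
    have : (0:ℝ) ≤ M - d + Real.sqrt ((M - d) ^ 2 - 1) := by
      have := Real.sqrt_nonneg ((M - d) ^ 2 - 1); linarith
    exact mul_nonneg (inv_nonneg.mpr hd0.le) (Real.rpow_nonneg this _)
  exact le_trans (csInf_le hbdd hmem) hmain
end

section
/- The unique L > 1 minimizing the function L ↦ ((L−1)/(L + 2√L + 1))^{log L} is L = 3 + 2√2; equivalently, with M₀(L) := (L+1)/(L−1), the map L ↦ (M₀(L) + √(M₀(L)²−1))^{−log L} is minimized over L > 1 at L = 3 + 2√2, where M₀ = √2 and M₀ + √(M₀²−1) = √2 + 1. -/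
noncomputable def F9 (L : ℝ) : ℝ := ((L - 1) / (L + 2 * Real.sqrt L + 1)) ^ Real.log L

noncomputable def M9 (L : ℝ) : ℝ := (L + 1) / (L - 1)

noncomputable def G9 (L : ℝ) : ℝ := (M9 L + Real.sqrt ((M9 L) ^ 2 - 1)) ^ (-Real.log L)

/-!
Write `L = t ^ 2` with `t = √L > 1`. The base of `F9` is then `(t - 1) / (t + 1)`, so
`F9 L = exp (-2 a b)` with `a = log t` and `b = log ((t + 1) / (t - 1))`, and the two exponents
are tied by `(eᵃ - 1) (eᵇ - 1) = 2 = (eᶜ - 1)²` for `c = log (1 + √2)`. The map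
`u ↦ log (exp (eᵘ) - 1)` is increasing and strictly convex, so Jensen's inequality at `log a` and
`log b` gives `a b < c²` unless `a = b = c`, i.e. unless `L = (1 + √2)² = 3 + 2√2`.
For `G9`, the identity `M₀ + √(M₀² - 1) = (t + 1) / (t - 1)` shows `G9 = F9` on `(1, ∞)`.
-/

open Real Set

theorem strictMonoOn_mul_exp_div_exp_sub_one :
    StrictMonoOn (fun x : ℝ => x * exp x / (exp x - 1)) (Ioi 0) := by
  intro x (hx : 0 < x) y (hy : 0 < y) hxy
  -- the function is the reciprocal of `(1 - exp (-x)) / x`, the slope of the convex `exp` on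
  -- `[-x, 0]`, which decreases as `x` grows
  have key := strictConvexOn_exp.secant_strict_mono_aux1 (mem_univ (-y)) (mem_univ 0)
    (neg_lt_neg hxy) (neg_neg_iff_pos.mpr hx)
  rw [exp_zero, exp_neg, exp_neg] at key
  have key' := mul_lt_mul_of_pos_right key (mul_pos (exp_pos x) (exp_pos y))
  field_simp at key'
  rw [div_lt_div_iff₀ (sub_pos.2 (one_lt_exp_iff.2 hx)) (sub_pos.2 (one_lt_exp_iff.2 hy))]
  linarith

theorem hasDerivAt_log_exp_exp_sub_one (u : ℝ) :
    HasDerivAt (fun u => log (exp (exp u) - 1)) (exp u * exp (exp u) / (exp (exp u) - 1)) u := by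
  convert ((hasDerivAt_exp u).exp.sub_const 1).log
    (sub_pos.2 (one_lt_exp_iff.2 (exp_pos u))).ne' using 1
  ring

theorem strictConvexOn_log_exp_exp_sub_one :
    StrictConvexOn ℝ univ (fun u => log (exp (exp u) - 1)) := by
  refine StrictMono.strictConvexOn_univ_of_deriv
    (continuous_iff_continuousAt.mpr fun u => (hasDerivAt_log_exp_exp_sub_one u).continuousAt) ?_
  intro u v huv
  simp only [(hasDerivAt_log_exp_exp_sub_one _).deriv]
  exact strictMonoOn_mul_exp_div_exp_sub_one (exp_pos u) (exp_pos v) (exp_lt_exp.mpr huv)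

theorem strictMono_log_exp_exp_sub_one : StrictMono (fun u => log (exp (exp u) - 1)) :=
  fun u _ huv => log_lt_log (sub_pos.2 (one_lt_exp_iff.2 (exp_pos u))) <|
    sub_lt_sub_right (exp_lt_exp.mpr (exp_lt_exp.mpr huv)) 1

theorem mul_lt_sq_of_exp_sub_one_mul_exp_sub_one_eq {a b c : ℝ} (ha : 0 < a) (hb : 0 < b)
    (hc : 0 < c) (h : (exp a - 1) * (exp b - 1) = (exp c - 1) ^ 2) (hac : a ≠ c) :
    a * b < c ^ 2 := by
  set ψ : ℝ → ℝ := fun u => log (exp (exp u) - 1)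
  have hpos {x : ℝ} (hx : 0 < x) : 0 < exp x - 1 := sub_pos.2 (one_lt_exp_iff.2 hx)
  have hψ {x : ℝ} (hx : 0 < x) : ψ (log x) = log (exp x - 1) := by simp [ψ, exp_log hx]
  have hab : a ≠ b := by
    rintro rfl
    have : exp a - 1 = exp c - 1 :=
      (pow_left_inj₀ (hpos ha).le (hpos hc).le two_ne_zero).mp (by rw [← h, sq])
    exact hac (exp_injective (by linarith))
  have hsum : ψ (log a) + ψ (log b) = 2 * ψ (log c) := by
    rw [hψ ha, hψ hb, hψ hc, ← log_mul (hpos ha).ne' (hpos hb).ne', h, log_pow, Nat.cast_ofNat]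
  have hmid : ψ ((1 / 2 : ℝ) • log a + (1 / 2 : ℝ) • log b) <
      (1 / 2 : ℝ) • ψ (log a) + (1 / 2 : ℝ) • ψ (log b) :=
    strictConvexOn_log_exp_exp_sub_one.2 (mem_univ _) (mem_univ _)
      ((log_injOn_pos.ne_iff ha hb).mpr hab) (by norm_num) (by norm_num) (by norm_num)
  have hlt : log a + log b < 2 * log c := by
    have : ψ ((log a + log b) / 2) < ψ (log c) := by
      simp only [smul_eq_mul] at hmid
      convert hmid using 2 <;> linarith
    linarith [strictMono_log_exp_exp_sub_one.lt_iff_lt.mp this]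
  calc a * b = exp (log a + log b) := by rw [exp_add, exp_log ha, exp_log hb]
    _ < exp (2 * log c) := exp_lt_exp.mpr hlt
    _ = c ^ 2 := by rw [mul_comm, exp_mul, exp_log hc, rpow_two]

theorem log_mul_log_div_lt {t : ℝ} (ht : 1 < t) (hne : t ≠ 1 + √2) :
    log t * log ((t + 1) / (t - 1)) < log (1 + √2) ^ 2 := by
  have hs : 0 < √2 := by positivity
  have ht1 : 0 < t - 1 := sub_pos.mpr ht
  refine mul_lt_sq_of_exp_sub_one_mul_exp_sub_one_eq (log_pos ht)
    (log_pos ((one_lt_div ht1).mpr (by linarith))) (log_pos (by linarith)) ?_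
    ((log_injOn_pos.ne_iff (by simp; linarith) (by simp; linarith)).mpr hne)
  rw [exp_log (by linarith), exp_log (div_pos (by linarith) ht1), exp_log (by linarith),
    add_sub_cancel_left, sq_sqrt zero_le_two]
  field_simp
  ring

theorem F9_sq {t : ℝ} (ht : 1 < t) :
    F9 (t ^ 2) = exp (-(2 * (log t * log ((t + 1) / (t - 1))))) := by
  have ht1 : 0 < t - 1 := sub_pos.mpr ht
  have hbase : (t ^ 2 - 1) / (t ^ 2 + 2 * √(t ^ 2) + 1) = ((t + 1) / (t - 1))⁻¹ := by
    rw [sqrt_sq (by linarith), inv_div]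
    field_simp
    ring
  rw [F9, hbase, rpow_def_of_pos (inv_pos.mpr (div_pos (by linarith) ht1)), log_inv, log_pow]
  push_cast
  ring_nf

theorem one_add_sqrt_two_add_one_div : (1 + √2 + 1) / (1 + √2 - 1) = 1 + √2 := by
  have hs : 0 < √2 := by positivity
  rw [div_eq_iff (by linarith)]
  nlinarith [sq_sqrt (zero_le_two (α := ℝ))]

theorem F9_one_add_sqrt_two_sq_lt {t : ℝ} (ht : 1 < t) (hne : t ≠ 1 + √2) :
    F9 ((1 + √2) ^ 2) < F9 (t ^ 2) := by
  have h := log_mul_log_div_lt ht hne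
  rw [F9_sq (lt_add_of_pos_right 1 (by positivity)), F9_sq ht, one_add_sqrt_two_add_one_div,
    exp_lt_exp]
  nlinarith

theorem exists_one_lt_sq_eq {L : ℝ} (hL : 1 < L) : ∃ t, 1 < t ∧ t ^ 2 = L :=
  ⟨√L, (lt_sqrt zero_le_one).mpr (by rwa [one_pow]), sq_sqrt (by linarith)⟩

theorem three_add_two_sqrt_two_eq_sq : 3 + 2 * √2 = (1 + √2) ^ 2 := by
  ring_nf
  rw [sq_sqrt zero_le_two]
  ring

theorem F9_three_add_two_sqrt_two_lt {L : ℝ} (hL : 1 < L) (hne : L ≠ 3 + 2 * √2) :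
    F9 (3 + 2 * √2) < F9 L := by
  obtain ⟨t, ht, rfl⟩ := exists_one_lt_sq_eq hL
  rw [three_add_two_sqrt_two_eq_sq] at hne ⊢
  exact F9_one_add_sqrt_two_sq_lt ht (by rintro rfl; exact hne rfl)

theorem M9_add_sqrt_M9_sq_sub_one {L : ℝ} (hL : 1 < L) :
    M9 L + √(M9 L ^ 2 - 1) = ((L - 1) / (L + 2 * √L + 1))⁻¹ := by
  obtain ⟨t, ht, rfl⟩ := exists_one_lt_sq_eq hL
  have ht1 : 0 < t ^ 2 - 1 := by nlinarith
  have hM : M9 (t ^ 2) ^ 2 - 1 = (2 * t / (t ^ 2 - 1)) ^ 2 := by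
    rw [M9]
    field_simp
    ring
  rw [hM, sqrt_sq (div_pos (by linarith) ht1).le, sqrt_sq (by linarith), M9, inv_div]
  field_simp
  ring

theorem G9_eq_F9 {L : ℝ} (hL : 1 < L) : G9 L = F9 L := by
  have hbase : 0 < (L - 1) / (L + 2 * √L + 1) := div_pos (by linarith) (by positivity)
  rw [G9, M9_add_sqrt_M9_sq_sub_one hL, inv_rpow hbase.le, rpow_neg hbase.le, inv_inv, F9]

theorem M9_three_add_two_sqrt_two : M9 (3 + 2 * √2) = √2 := by
  rw [M9, div_eq_iff (by linarith [sqrt_nonneg 2] : 3 + 2 * √2 - 1 ≠ 0)]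
  nlinarith [sq_sqrt (zero_le_two (α := ℝ))]

/-- The unique minimizer over `L > 1` of `L ↦ ((L-1)/(L+2√L+1))^{log L}` is `L = 3+2√2`;
equivalently `L ↦ (M₀(L)+√(M₀(L)²-1))^{-log L}` with `M₀(L)=(L+1)/(L-1)` is minimized
there, where `M₀ = √2` and `M₀+√(M₀²-1) = √2+1`. -/
theorem optimal_geometric_ratio :
    (∀ L : ℝ, 1 < L → F9 (3 + 2 * Real.sqrt 2) ≤ F9 L) ∧
    (∀ L : ℝ, 1 < L → F9 L = F9 (3 + 2 * Real.sqrt 2) → L = 3 + 2 * Real.sqrt 2) ∧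
    (∀ L : ℝ, 1 < L → G9 (3 + 2 * Real.sqrt 2) ≤ G9 L) ∧
    (∀ L : ℝ, 1 < L → G9 L = G9 (3 + 2 * Real.sqrt 2) → L = 3 + 2 * Real.sqrt 2) ∧
    M9 (3 + 2 * Real.sqrt 2) = Real.sqrt 2 ∧
    M9 (3 + 2 * Real.sqrt 2) + Real.sqrt ((M9 (3 + 2 * Real.sqrt 2)) ^ 2 - 1) =
      Real.sqrt 2 + 1 := by
  have hstar : 1 < 3 + 2 * √2 := by linarith [sqrt_nonneg 2]
  have hmin (L : ℝ) (hL : 1 < L) : F9 (3 + 2 * √2) ≤ F9 L := by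
    rcases eq_or_ne L (3 + 2 * √2) with rfl | hne
    exacts [le_rfl, (F9_three_add_two_sqrt_two_lt hL hne).le]
  have huniq (L : ℝ) (hL : 1 < L) (h : F9 L = F9 (3 + 2 * √2)) : L = 3 + 2 * √2 := by
    by_contra hne
    exact (F9_three_add_two_sqrt_two_lt hL hne).ne' h
  refine ⟨hmin, huniq, fun L hL => ?_, fun L hL h => ?_, M9_three_add_two_sqrt_two, ?_⟩
  · rw [G9_eq_F9 hL, G9_eq_F9 hstar]
    exact hmin L hL
  · rw [G9_eq_F9 hL, G9_eq_F9 hstar] at h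
    exact huniq L hL h
  · rw [M9_three_add_two_sqrt_two, sq_sqrt zero_le_two]
    norm_num
end

section
/- Let L = 3 + 2√2 and for c ∈ (0,1] define M(c) := (cL+1)/(cL−1) (assuming cL > 1). Then M(c) + √(M(c)² − 1) ≥ (√2 + 1)(1 + (1−c)/2). -/
/-! Put `t = cL` and `u = √t`. Then `M = (u² + 1)/(u² - 1)` and `√(M² - 1) = 2u/(u² - 1)`, so the
left-hand side is `(u + 1)/(u - 1)`. As `L = (1 + √2)²`, the claimed bound becomes a cubic inequality
in `u` whose defect is `(u - (1 + √2))² (u + 1 + 2√2)`: the two sides are tangent at `c = 1`. -/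

open Real

lemma div_add_sqrt_div_sq_sub_one {t : ℝ} (ht : 1 < t) :
    (t + 1) / (t - 1) + √(((t + 1) / (t - 1)) ^ 2 - 1) = (√t + 1) / (√t - 1) := by
  have hu : 1 < √t := by rwa [lt_sqrt zero_le_one, one_pow]
  have hsq : √t ^ 2 = t := sq_sqrt (by linarith)
  have ht' : t - 1 ≠ 0 := by linarith
  have hroot : √(((t + 1) / (t - 1)) ^ 2 - 1) = 2 * √t / (t - 1) := by
    rw [← sqrt_sq (by positivity : 0 ≤ 2 * √t / (t - 1))]
    congr 1
    field_simp
    linear_combination (-4) * hsq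
  rw [hroot, ← add_div, div_eq_div_iff ht' (by linarith)]
  linear_combination 2 * hsq

lemma sqrt_two_add_one_mul_le_div {c u : ℝ} (hu : 1 < u) (hcu : c * (3 + 2 * √2) = u ^ 2) :
    (√2 + 1) * (1 + (1 - c) / 2) ≤ (u + 1) / (u - 1) := by
  have hs : √2 ^ 2 = 2 := sq_sqrt zero_le_two
  have hgap : 2 * (√2 + 1) * ((u + 1) - (√2 + 1) * (1 + (1 - c) / 2) * (u - 1)) =
      (u - (√2 + 1)) ^ 2 * (u + 1 + 2 * √2) := by
    linear_combination (u - 1) * hcu + (c * (u - 1) - 2 * (√2 + 1)) * hs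
  rw [le_div_iff₀ (by linarith), ← sub_nonneg]
  refine nonneg_of_mul_nonneg_right ?_ (by positivity : (0:ℝ) < 2 * (√2 + 1))
  rw [hgap]
  positivity

theorem bernstein_parameter_lower_bound_general (c : ℝ)
    (hcL : 1 < c * (3 + 2 * Real.sqrt 2)) :
    (Real.sqrt 2 + 1) * (1 + (1 - c) / 2) ≤
      (c * (3 + 2 * Real.sqrt 2) + 1) / (c * (3 + 2 * Real.sqrt 2) - 1) +
        Real.sqrt (((c * (3 + 2 * Real.sqrt 2) + 1) /
          (c * (3 + 2 * Real.sqrt 2) - 1)) ^ 2 - 1) := by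
  rw [div_add_sqrt_div_sq_sub_one hcL]
  exact sqrt_two_add_one_mul_le_div (by rwa [lt_sqrt zero_le_one, one_pow])
    (sq_sqrt (by linarith)).symm

/-- For `L = 3+2√2` and `c ∈ (0,1]` with `cL > 1`, setting `M(c) = (cL+1)/(cL-1)`,
one has `M(c) + √(M(c)²-1) ≥ (√2+1)(1+(1-c)/2)`. -/
theorem bernstein_parameter_lower_bound (c : ℝ) (hc₀ : 0 < c) (hc₁ : c ≤ 1)
    (hcL : 1 < c * (3 + 2 * Real.sqrt 2)) :
    (Real.sqrt 2 + 1) * (1 + (1 - c) / 2) ≤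
      (c * (3 + 2 * Real.sqrt 2) + 1) / (c * (3 + 2 * Real.sqrt 2) - 1) +
        Real.sqrt (((c * (3 + 2 * Real.sqrt 2) + 1) /
          (c * (3 + 2 * Real.sqrt 2) - 1)) ^ 2 - 1) :=
  bernstein_parameter_lower_bound_general c hcL
end

section
/- Let n ≥ 1 and let f : ℝ → ℝ be n times weakly differentiable. Let a < b be reals. Then there exists an n times weakly differentiable g : ℝ → ℝ such that g(x) = f(x) for x ≤ a, g(x) = 0 for x ≥ b, and for each k = 0,…,n and x ∈ [a,b], |g^{(k)}(x)| ≤ Σ_{i=0}^k binom(k,i) c_{k−i} (b−a)^{−(k−i)} |f^{(i)}(x)|, where the constants c_j depend only on j (not on f, a, b). -/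
/-!
Take `g = f · μ`, where `μ(x) = ψ((b - x)/(b - a))` for a smooth transition `ψ` that is `0` on
`(-∞, 0]` and `1` on `[1, ∞)`. By the chain rule `μ⁽ʲ⁾(x) = (a - b)⁻ʲ ψ⁽ʲ⁾((b - x)/(b - a))`, and for
`x ∈ [a, b]` the argument of `ψ⁽ʲ⁾` lies in `[0, 1]`, so `|μ⁽ʲ⁾| ≤ c_j (b - a)⁻ʲ` with
`c_j = sup_{[0,1]} |ψ⁽ʲ⁾|`. The Leibniz rule then gives the bound on `g⁽ᵏ⁾`.
-/

open Finset Set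

lemma norm_iteratedDeriv_mul_le {𝕜 A : Type*} [NontriviallyNormedField 𝕜] [NormedRing A]
    [NormedAlgebra 𝕜 A] {f g : 𝕜 → A} {N : WithTop ℕ∞} (hf : ContDiff 𝕜 N f)
    (hg : ContDiff 𝕜 N g) (x : 𝕜) {k : ℕ} (hk : k ≤ N) :
    ‖iteratedDeriv k (fun y => f y * g y) x‖ ≤ ∑ i ∈ range (k + 1),
      (k.choose i : ℝ) * ‖iteratedDeriv i f x‖ * ‖iteratedDeriv (k - i) g x‖ := by
  simpa only [norm_iteratedFDeriv_eq_norm_iteratedDeriv] using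
    norm_iteratedFDeriv_mul_le hf hg x hk

lemma iteratedDeriv_comp_const_mul_const_sub {𝕜 : Type*} [NontriviallyNormedField 𝕜] {n : ℕ}
    {f : 𝕜 → 𝕜} (hf : ContDiff 𝕜 n f) (c s x : 𝕜) :
    iteratedDeriv n (fun y => f (c * (s - y))) x = (-c) ^ n * iteratedDeriv n f (c * (s - x)) := by
  rw [iteratedDeriv_comp_const_sub n (fun z => f (c * z)) s, iteratedDeriv_comp_const_mul hf c]
  simp only [smul_eq_mul]
  ring

namespace Real

noncomputable def smoothTransitionDerivBound (j : ℕ) : ℝ :=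
  sSup ((fun t => |iteratedDeriv j smoothTransition t|) '' Icc 0 1)

lemma abs_iteratedDeriv_smoothTransition_le (j : ℕ) {t : ℝ} (ht : t ∈ Icc (0 : ℝ) 1) :
    |iteratedDeriv j smoothTransition t| ≤ smoothTransitionDerivBound j := by
  have hcont : Continuous fun t => |iteratedDeriv j smoothTransition t| :=
    (smoothTransition.contDiff.continuous_iteratedDeriv (n := j) j le_rfl).abs
  exact le_csSup (isCompact_Icc.bddAbove_image hcont.continuousOn) (mem_image_of_mem _ ht)

end Real

open Real

noncomputable def smoothCutoff (a b x : ℝ) : ℝ :=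
  smoothTransition ((b - a)⁻¹ * (b - x))

variable {a b : ℝ}

lemma contDiff_smoothCutoff {n : ℕ∞} : ContDiff ℝ n (smoothCutoff a b) :=
  smoothTransition.contDiff.comp (contDiff_const.mul (contDiff_const.sub contDiff_id))

lemma smoothCutoff_of_le_left (hab : a < b) {x : ℝ} (hx : x ≤ a) : smoothCutoff a b x = 1 := by
  refine smoothTransition.one_of_one_le ?_
  rw [inv_mul_eq_div, le_div_iff₀ (sub_pos.2 hab)]
  linarith

lemma smoothCutoff_of_right_le (hab : a ≤ b) {x : ℝ} (hx : b ≤ x) : smoothCutoff a b x = 0 :=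
  smoothTransition.zero_of_nonpos
    (mul_nonpos_of_nonneg_of_nonpos (inv_nonneg.2 (sub_nonneg.2 hab)) (sub_nonpos.2 hx))

lemma abs_iteratedDeriv_smoothCutoff_le (hab : a < b) (j : ℕ) {x : ℝ} (hx : x ∈ Icc a b) :
    |iteratedDeriv j (smoothCutoff a b) x| ≤
      smoothTransitionDerivBound j * (b - a) ^ (-(j : ℤ)) := by
  have hd : 0 < b - a := sub_pos.2 hab
  have hmem : (b - a)⁻¹ * (b - x) ∈ Icc (0 : ℝ) 1 := by
    rw [inv_mul_eq_div]
    exact ⟨div_nonneg (by linarith [hx.2]) hd.le, (div_le_one hd).2 (by linarith [hx.1])⟩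
  have hchain : iteratedDeriv j (smoothCutoff a b) x =
      (-(b - a)⁻¹) ^ j * iteratedDeriv j smoothTransition ((b - a)⁻¹ * (b - x)) :=
    iteratedDeriv_comp_const_mul_const_sub (smoothTransition.contDiff (n := j)) _ b x
  calc |iteratedDeriv j (smoothCutoff a b) x|
      = (b - a)⁻¹ ^ j * |iteratedDeriv j smoothTransition ((b - a)⁻¹ * (b - x))| := by
        rw [hchain, abs_mul, abs_pow, abs_neg, abs_of_pos (inv_pos.2 hd)]
    _ ≤ (b - a)⁻¹ ^ j * smoothTransitionDerivBound j := by
        gcongr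
        exact abs_iteratedDeriv_smoothTransition_le j hmem
    _ = smoothTransitionDerivBound j * (b - a) ^ (-(j : ℤ)) := by
        rw [zpow_neg, zpow_natCast, inv_pow, mul_comm]

theorem localizing_function_general (n : ℕ) :
    ∃ c : ℕ → ℝ, ∀ (f : ℝ → ℝ) (a b : ℝ), a < b → ContDiff ℝ n f →
      ∃ g : ℝ → ℝ, ContDiff ℝ n g ∧ (∀ x ≤ a, g x = f x) ∧ (∀ x, b ≤ x → g x = 0) ∧
        ∀ k ≤ n, ∀ x ∈ Set.Icc a b,
          |iteratedDeriv k g x| ≤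
            ∑ i ∈ Finset.range (k + 1),
              (k.choose i : ℝ) * c (k - i) * (b - a) ^ (-(((k - i : ℕ)) : ℤ)) *
                |iteratedDeriv i f x| := by
  refine ⟨smoothTransitionDerivBound, fun f a b hab hf => ?_⟩
  have hμ : ContDiff ℝ n (smoothCutoff a b) := contDiff_smoothCutoff
  refine ⟨fun x => f x * smoothCutoff a b x, hf.mul hμ, fun x hx => ?_, fun x hx => ?_,
    fun k hk x hx => ?_⟩
  · simp only [smoothCutoff_of_le_left hab hx, mul_one]
  · simp only [smoothCutoff_of_right_le hab.le hx, mul_zero]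
  · have hleibniz := norm_iteratedDeriv_mul_le hf hμ x (by exact_mod_cast hk)
    simp only [Real.norm_eq_abs] at hleibniz
    refine hleibniz.trans (sum_le_sum fun i _ => ?_)
    calc (k.choose i : ℝ) * |iteratedDeriv i f x| * |iteratedDeriv (k - i) (smoothCutoff a b) x|
        ≤ (k.choose i : ℝ) * |iteratedDeriv i f x| *
            (smoothTransitionDerivBound (k - i) * (b - a) ^ (-((k - i : ℕ) : ℤ))) := by
          gcongr
          exact abs_iteratedDeriv_smoothCutoff_le hab (k - i) hx
      _ = _ := by ring

/-- Smooth localization: given an `n` times differentiable `f` and `a < b`, there is an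
`n` times differentiable `g` equal to `f` on `(-∞,a]`, vanishing on `[b,∞)`, with
derivative bounds on `[a,b]` involving constants depending only on the order. -/
theorem localizing_function (n : ℕ) (hn : 1 ≤ n) :
    ∃ c : ℕ → ℝ, ∀ (f : ℝ → ℝ) (a b : ℝ), a < b → ContDiff ℝ n f →
      ∃ g : ℝ → ℝ, ContDiff ℝ n g ∧ (∀ x ≤ a, g x = f x) ∧ (∀ x, b ≤ x → g x = 0) ∧
        ∀ k ≤ n, ∀ x ∈ Set.Icc a b,
          |iteratedDeriv k g x| ≤
            ∑ i ∈ Finset.range (k + 1),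
              (k.choose i : ℝ) * c (k - i) * (b - a) ^ (-(((k - i : ℕ)) : ℤ)) *
                |iteratedDeriv i f x| :=
  localizing_function_general n
end

section
/- Let h : [0,∞) → ℝ be Lipschitz with constant L and h(0) = 0. For n ≥ 1 define h_n : [0,∞) → ℝ via its second weak derivative h_n''(x) := 4(h((k+1)/n) − h(k/n)) n² for x ∈ [k/n, (k+1/2)/n] and h_n''(x) := −4(h((k+1)/n) − h(k/n)) n² for x ∈ [(k+1/2)/n, (k+1)/n] (k ∈ ℕ₀), together with h_n(0) = h_n'(0) = 0. Then for every k ∈ ℕ₀: h_n'(k/n) = 0 and h_n(k/n) = h(k/n); moreover |h_n'(x)| ≤ 2L and |h_n''(x)| ≤ 4Ln² for all x, and ‖h − h_n‖_∞ ≤ L/n. -/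
open MeasureTheory

lemma aux_const (D : ℝ → ℝ) (c a x : ℝ) (hax : a ≤ x) (h1 : ∀ u ∈ Set.Icc a x, D u = c) :
    ∫ u in a..x, D u = c * (x - a) := by
  rw [intervalIntegral.integral_congr (g := fun _ => c)
    (fun u hu => by rw [Set.uIcc_of_le hax] at hu; exact h1 u hu)]
  simp [smul_eq_mul]; ring

lemma aux_step (D : ℝ → ℝ) (c a m x : ℝ) (ham : a ≤ m) (hmx : m < x)
    (hi1 : IntervalIntegrable D volume a m)
    (hi2 : IntervalIntegrable D volume m x)
    (h1 : ∀ u ∈ Set.Icc a m, D u = c) (h2 : ∀ u ∈ Set.Ioo m x, D u = -c) :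
    ∫ u in a..x, D u = c * (m - a) - c * (x - m) := by
  rw [← intervalIntegral.integral_add_adjacent_intervals hi1 hi2]
  rw [aux_const D c a m ham h1]
  have e2 : ∫ u in m..x, D u = -c * (x - m) := by
    have hx : ∀ᵐ u : ℝ, u ≠ x := by
      filter_upwards [compl_mem_ae_iff.mpr (measure_singleton x)] with u hu
      simpa using hu
    rw [intervalIntegral.integral_congr_ae (g := fun _ => -c) ?_]
    · simp [smul_eq_mul]; ring
    · filter_upwards [hx] with u hu hmem
      rw [Set.uIoc_of_le hmx.le] at hmem
      exact h2 u ⟨hmem.1, lt_of_le_of_ne hmem.2 hu⟩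
  rw [e2]; ring

lemma aux_tent (c a b x : ℝ) (hab : a < b) (hax : a ≤ x) (hxb : x ≤ b) :
    ∫ u in a..x, (if u ≤ (a+b)/2 then c*(u-a) else c*(b-u)) =
      (if x ≤ (a+b)/2 then c/2*(x-a)^2 else c/4*(b-a)^2 - c/2*(b-x)^2) := by
  set m : ℝ := (a+b)/2 with hm
  have ham : a ≤ m := by rw [hm]; linarith
  set g : ℝ → ℝ := fun u => if u ≤ m then c*(u-a) else c*(b-u) with hg
  set Φ : ℝ → ℝ := fun u => if u ≤ m then c/2*(u-a)^2 else c/4*(b-a)^2 - c/2*(b-u)^2 with hΦ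
  have hgc : Continuous g := by
    apply Continuous.if_le (by continuity) (by continuity) continuous_id continuous_const
    intro u hu; simp only [id_eq] at hu; rw [hu, hm]; ring
  have hΦc : Continuous Φ := by
    apply Continuous.if_le (by continuity) (by continuity) continuous_id continuous_const
    intro u hu; simp only [id_eq] at hu; rw [hu, hm]; ring
  have hq1 : ∀ y : ℝ, HasDerivAt (fun u => c/2*(u-a)^2) (c*(y-a)) y := by
    intro y
    have : HasDerivAt (fun u : ℝ => c/2*(u-a)^2) (c/2*((2:ℕ)*(y-a)^(2-1)*1)) y := (((hasDerivAt_id' (x := y)).sub_const a).pow 2).const_mul (c/2)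
    convert this using 1; push_cast; ring
  have hq2 : ∀ y : ℝ, HasDerivAt (fun u => c/4*(b-a)^2 - c/2*(b-u)^2) (c*(b-y)) y := by
    intro y
    have h1 : HasDerivAt (fun u : ℝ => b - u) (-1) y := by
      simpa using (hasDerivAt_id' (x := y)).const_sub b
    have : HasDerivAt (fun u : ℝ => c/4*(b-a)^2 - c/2*(b-u)^2) (0 - c/2*((2:ℕ)*(b-y)^(2-1)*(-1))) y := (hasDerivAt_const y (c/4*(b-a)^2)).sub ((h1.pow 2).const_mul (c/2))
    convert this using 1; push_cast; ring
  have hderiv : ∀ y ∈ Set.Ioo a x, HasDerivWithinAt Φ (g y) (Set.Ioi y) y := by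
    intro y hy
    rcases lt_or_ge y m with hym | hym
    · have hev : Φ =ᶠ[nhds y] (fun u => c/2*(u-a)^2) := by
        filter_upwards [Iio_mem_nhds hym] with u hu
        exact if_pos (Set.mem_Iio.mp hu).le
      have hd := ((hq1 y).congr_of_eventuallyEq hev).hasDerivWithinAt (s := Set.Ioi y)
      have hgy : g y = c*(y-a) := if_pos hym.le
      rwa [hgy]
    · have heq : ∀ u ∈ Set.Ici y, Φ u = c/4*(b-a)^2 - c/2*(b-u)^2 := by
        intro u hu
        show (if u ≤ m then c/2*(u-a)^2 else c/4*(b-a)^2 - c/2*(b-u)^2) = _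
        rcases le_or_gt u m with hum | hum
        · have hum' : u = m := le_antisymm hum (le_trans hym hu)
          rw [if_pos hum, hum', hm]; ring
        · rw [if_neg (not_le.mpr hum)]
      have hd := ((hq2 y).hasDerivWithinAt (s := Set.Ici y)).congr heq (heq y (Set.mem_Ici.mpr le_rfl))
      have hgy : g y = c*(b-y) := by
        show (if y ≤ m then c*(y-a) else c*(b-y)) = _
        rcases le_or_gt y m with h' | h'
        · have hy' : y = m := le_antisymm h' hym
          rw [if_pos h', hy', hm]; ring
        · rw [if_neg (not_le.mpr h')]
      rw [hgy]
      exact hd.mono Set.Ioi_subset_Ici_self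
  have hFTC := intervalIntegral.integral_eq_sub_of_hasDeriv_right_of_le hax
    (hΦc.continuousOn) hderiv (hgc.intervalIntegrable a x)
  rw [hFTC]
  have hΦa : Φ a = 0 := by
    show (if a ≤ m then c/2*(a-a)^2 else c/4*(b-a)^2 - c/2*(b-a)^2) = 0
    rw [if_pos ham]; ring
  rw [hΦa, sub_zero]

set_option maxHeartbeats 1000000 in
/-- Piecewise-quadratic interpolation of a Lipschitz function `h` with `h(0)=0`:
the interpolant `hn` (with second derivative `D` as prescribed and `hn(0)=hn'(0)=0`)
matches `h` at the grid points `k/n`, has vanishing derivative there, satisfies the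
derivative bounds `|hn'| ≤ 2L`, `|D| ≤ 4Ln²`, and `‖h - hn‖_∞ ≤ L/n` on `[0,∞)`. -/
theorem piecewise_quadratic_interpolation (h : ℝ → ℝ) (L : ℝ) (hL : 0 ≤ L)
    (hlip : ∀ x y : ℝ, 0 ≤ x → 0 ≤ y → |h x - h y| ≤ L * |x - y|)
    (h0 : h 0 = 0) (n : ℕ) (hn : 1 ≤ n)
    (D : ℝ → ℝ)
    (hD : ∀ x : ℝ, 0 ≤ x → D x =
      (if (n : ℝ) * x - (⌊(n : ℝ) * x⌋₊ : ℝ) ≤ 1/2 then (1:ℝ) else -1) *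
        (4 * (h (((⌊(n : ℝ) * x⌋₊ : ℝ) + 1) / n) - h ((⌊(n : ℝ) * x⌋₊ : ℝ) / n)) * n ^ 2))
    (hn' : ℝ → ℝ) (hhn' : ∀ x : ℝ, hn' x = ∫ u in (0:ℝ)..x, D u)
    (hnf : ℝ → ℝ) (hhnf : ∀ x : ℝ, hnf x = ∫ s in (0:ℝ)..x, hn' s) :
    (∀ k : ℕ, hn' ((k : ℝ) / n) = 0) ∧
    (∀ k : ℕ, hnf ((k : ℝ) / n) = h ((k : ℝ) / n)) ∧
    (∀ x : ℝ, 0 ≤ x → |hn' x| ≤ 2 * L) ∧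
    (∀ x : ℝ, 0 ≤ x → |D x| ≤ 4 * L * n ^ 2) ∧
    (∀ x : ℝ, 0 ≤ x → |h x - hnf x| ≤ L / n) := by
  have hn0 : (0:ℝ) < (n:ℝ) := by exact_mod_cast (by omega : 0 < n)
  have hnne : (n:ℝ) ≠ 0 := ne_of_gt hn0
  have hone : (1:ℝ) ≤ (n:ℝ) := by exact_mod_cast hn
  -- Lipschitz increment bound
  have hΔ : ∀ k : ℕ, |h (((k:ℝ)+1)/n) - h ((k:ℝ)/n)| ≤ L / n := by
    intro k
    have hb := hlip (((k:ℝ)+1)/n) ((k:ℝ)/n) (by positivity) (by positivity)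
    rw [show ((k:ℝ)+1)/n - (k:ℝ)/n = 1/n by ring,
      abs_of_nonneg (show (0:ℝ) ≤ 1/(n:ℝ) by positivity)] at hb
    calc |h (((k:ℝ)+1)/n) - h ((k:ℝ)/n)| ≤ L * (1/n) := hb
      _ = L / n := by ring
  have hab : ∀ k : ℕ, (k:ℝ)/n < ((k:ℝ)+1)/n := by
    intro k; rw [div_lt_div_iff₀ hn0 hn0]; nlinarith [Nat.cast_nonneg (α := ℝ) k]
  have hmb : ∀ k : ℕ, ((k:ℝ)/n + ((k:ℝ)+1)/n)/2 < ((k:ℝ)+1)/n := by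
    intro k; linarith [hab k]
  have ham : ∀ k : ℕ, (k:ℝ)/n ≤ ((k:ℝ)/n + ((k:ℝ)+1)/n)/2 := by
    intro k; linarith [hab k]
  -- floor identification
  have hfl : ∀ (k : ℕ) (u : ℝ), (k:ℝ)/n ≤ u → u < ((k:ℝ)+1)/n → (⌊(n:ℝ)*u⌋₊ : ℕ) = k := by
    intro k u h1 h2
    have hu0 : (0:ℝ) ≤ (n:ℝ)*u := by
      have h3 : (0:ℝ) ≤ (k:ℝ)/n := by positivity
      nlinarith [h3.trans h1]
    rw [Nat.floor_eq_iff hu0]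
    constructor
    · have := (div_le_iff₀ hn0).mp h1; linarith
    · have := (lt_div_iff₀ hn0).mp h2; linarith
  have hDval : ∀ (k : ℕ) (u : ℝ), (k:ℝ)/n ≤ u → u < ((k:ℝ)+1)/n →
      D u = (if (n:ℝ)*u - (k:ℝ) ≤ 1/2 then (1:ℝ) else -1) *
        (4 * (h (((k:ℝ)+1)/n) - h ((k:ℝ)/n)) * (n:ℝ)^2) := by
    intro k u h1 h2
    have hu0 : 0 ≤ u := le_trans (by positivity) h1
    rw [hD u hu0, hfl k u h1 h2]
  -- global integrability of D on [s,t] ⊆ [0,∞)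
  have hmeas : Measurable fun x : ℝ =>
      (if (n : ℝ) * x - (⌊(n : ℝ) * x⌋₊ : ℝ) ≤ 1/2 then (1:ℝ) else -1) *
        (4 * (h (((⌊(n : ℝ) * x⌋₊ : ℝ) + 1) / n) - h ((⌊(n : ℝ) * x⌋₊ : ℝ) / n)) * (n:ℝ) ^ 2) := by
    have hflm : Measurable fun x : ℝ => (⌊(n:ℝ)*x⌋₊ : ℕ) :=
      Nat.measurable_floor.comp (measurable_id.const_mul _)
    have hcast : Measurable fun x : ℝ => ((⌊(n:ℝ)*x⌋₊ : ℕ) : ℝ) :=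
      (measurable_from_nat (f := fun k : ℕ => (k:ℝ))).comp hflm
    apply Measurable.mul
    · exact Measurable.ite
        (measurableSet_le ((measurable_id.const_mul _).sub hcast) measurable_const)
        measurable_const measurable_const
    · exact (measurable_from_nat
        (f := fun k : ℕ => 4 * (h (((k:ℝ)+1)/n) - h ((k:ℝ)/n)) * (n:ℝ)^2)).comp hflm
  have habs : ∀ k : ℕ, |4 * (h (((k:ℝ)+1)/n) - h ((k:ℝ)/n)) * (n:ℝ)^2| ≤ 4*L*(n:ℝ) := by
    intro k
    rw [abs_mul, abs_mul, abs_of_nonneg (by norm_num : (0:ℝ) ≤ 4),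
      abs_of_nonneg (sq_nonneg ((n:ℝ)))]
    calc 4 * |h (((k:ℝ)+1)/n) - h ((k:ℝ)/n)| * (n:ℝ)^2 ≤ 4 * (L/n) * (n:ℝ)^2 := by
          gcongr; exact hΔ k
      _ = 4*L*(n:ℝ) := by field_simp
  have hDint : ∀ s t : ℝ, 0 ≤ s → s ≤ t → IntervalIntegrable D volume s t := by
    intro s t hs hst
    rw [intervalIntegrable_iff_integrableOn_Ioc_of_le hst]
    have hFint : IntegrableOn (fun x : ℝ =>
        (if (n : ℝ) * x - (⌊(n : ℝ) * x⌋₊ : ℝ) ≤ 1/2 then (1:ℝ) else -1) *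
          (4 * (h (((⌊(n : ℝ) * x⌋₊ : ℝ) + 1) / n) - h ((⌊(n : ℝ) * x⌋₊ : ℝ) / n)) * (n:ℝ) ^ 2))
        (Set.Ioc s t) volume := by
      apply Measure.integrableOn_of_bounded (M := 4*L*(n:ℝ)) measure_Ioc_lt_top.ne
        hmeas.aestronglyMeasurable
      filter_upwards with x
      rw [Real.norm_eq_abs, abs_mul]
      have h1 : |(if (n:ℝ)*x - (⌊(n:ℝ)*x⌋₊:ℝ) ≤ 1/2 then (1:ℝ) else -1)| = 1 := by
        split <;> norm_num
      rw [h1, one_mul]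
      exact habs _
    refine hFint.congr_fun (fun u hu => ?_) measurableSet_Ioc
    exact (hD u (hs.trans hu.1.le)).symm
  -- the hn' formula on each cell
  have hcell : ∀ (k : ℕ), hn' ((k:ℝ)/n) = 0 → ∀ x, (k:ℝ)/n ≤ x → x ≤ ((k:ℝ)+1)/n →
      hn' x = (if x ≤ ((k:ℝ)/n + ((k:ℝ)+1)/n)/2
        then (4 * (h (((k:ℝ)+1)/n) - h ((k:ℝ)/n)) * (n:ℝ)^2) * (x - (k:ℝ)/n)
        else (4 * (h (((k:ℝ)+1)/n) - h ((k:ℝ)/n)) * (n:ℝ)^2) * (((k:ℝ)+1)/n - x)) := by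
    intro k hk0 x hax hxb
    have ha0 : (0:ℝ) ≤ (k:ℝ)/n := by positivity
    have hnm : (n:ℝ) * (((k:ℝ)/n + ((k:ℝ)+1)/n)/2) = (k:ℝ) + 1/2 := by field_simp; ring
    have hDc : ∀ u ∈ Set.Icc ((k:ℝ)/n) (((k:ℝ)/n + ((k:ℝ)+1)/n)/2),
        D u = 4 * (h (((k:ℝ)+1)/n) - h ((k:ℝ)/n)) * (n:ℝ)^2 := by
      intro u hu
      have hub : u < ((k:ℝ)+1)/n := lt_of_le_of_lt hu.2 (hmb k)
      rw [hDval k u hu.1 hub, if_pos ?_, one_mul]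
      have := mul_le_mul_of_nonneg_left hu.2 hn0.le
      rw [hnm] at this; linarith
    have hDm : ∀ u ∈ Set.Ioo (((k:ℝ)/n + ((k:ℝ)+1)/n)/2) x,
        D u = -(4 * (h (((k:ℝ)+1)/n) - h ((k:ℝ)/n)) * (n:ℝ)^2) := by
      intro u hu
      have hua : (k:ℝ)/n ≤ u := le_trans (ham k) hu.1.le
      have hub : u < ((k:ℝ)+1)/n := lt_of_lt_of_le hu.2 hxb
      rw [hDval k u hua hub, if_neg ?_, neg_one_mul]
      have := mul_lt_mul_of_pos_left hu.1 hn0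
      rw [hnm] at this; push_neg; linarith
    rw [hhn' x, ← intervalIntegral.integral_add_adjacent_intervals
      (hDint 0 ((k:ℝ)/n) le_rfl ha0) (hDint ((k:ℝ)/n) x ha0 hax),
      ← hhn' ((k:ℝ)/n), hk0, zero_add]
    by_cases hxm : x ≤ ((k:ℝ)/n + ((k:ℝ)+1)/n)/2
    · rw [if_pos hxm, aux_const D _ _ x hax (fun u hu => hDc u ⟨hu.1, hu.2.trans hxm⟩)]
    · push_neg at hxm
      rw [if_neg (not_le.mpr hxm),
        aux_step D _ _ _ x (ham k) hxm (hDint _ _ ha0 (ham k))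
          (hDint _ _ (ha0.trans (ham k)) hxm.le) hDc hDm]
      ring
  -- integrability of hn' on cells
  have hgcont : ∀ k : ℕ, Continuous (fun u : ℝ => if u ≤ ((k:ℝ)/n + ((k:ℝ)+1)/n)/2
      then (4 * (h (((k:ℝ)+1)/n) - h ((k:ℝ)/n)) * (n:ℝ)^2) * (u - (k:ℝ)/n)
      else (4 * (h (((k:ℝ)+1)/n) - h ((k:ℝ)/n)) * (n:ℝ)^2) * (((k:ℝ)+1)/n - u)) := by
    intro k
    apply Continuous.if_le (continuous_const.mul (continuous_id.sub continuous_const))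
      (continuous_const.mul (continuous_const.sub continuous_id)) continuous_id continuous_const
    intro u hu; simp only [id_eq, Pi.mul_apply, Pi.sub_apply] at hu ⊢; rw [hu]; ring
  have cellInt : ∀ (k : ℕ), hn' ((k:ℝ)/n) = 0 → ∀ x, (k:ℝ)/n ≤ x → x ≤ ((k:ℝ)+1)/n →
      IntervalIntegrable hn' volume ((k:ℝ)/n) x := by
    intro k hk0 x hax hxb
    refine IntervalIntegrable.congr_ae ((hgcont k).intervalIntegrable ((k:ℝ)/n) x) ?_
    refine (ae_restrict_iff' measurableSet_uIoc).mpr (ae_of_all _ fun u hu => ?_)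
    rw [Set.uIoc_of_le hax] at hu
    exact (hcell k hk0 u hu.1.le (hu.2.trans hxb)).symm
  -- the hnf formula on each cell
  have cellF : ∀ (k : ℕ), hn' ((k:ℝ)/n) = 0 → hnf ((k:ℝ)/n) = h ((k:ℝ)/n) →
      IntervalIntegrable hn' volume 0 ((k:ℝ)/n) → ∀ x, (k:ℝ)/n ≤ x → x ≤ ((k:ℝ)+1)/n →
      hnf x = h ((k:ℝ)/n) +
        (if x ≤ ((k:ℝ)/n + ((k:ℝ)+1)/n)/2
          then (4 * (h (((k:ℝ)+1)/n) - h ((k:ℝ)/n)) * (n:ℝ)^2)/2 * (x - (k:ℝ)/n)^2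
          else (4 * (h (((k:ℝ)+1)/n) - h ((k:ℝ)/n)) * (n:ℝ)^2)/4 * (((k:ℝ)+1)/n - (k:ℝ)/n)^2
            - (4 * (h (((k:ℝ)+1)/n) - h ((k:ℝ)/n)) * (n:ℝ)^2)/2 * (((k:ℝ)+1)/n - x)^2) := by
    intro k hk0 hkf hint x hax hxb
    rw [hhnf x, ← intervalIntegral.integral_add_adjacent_intervals hint
      (cellInt k hk0 x hax hxb), ← hhnf ((k:ℝ)/n), hkf]
    congr 1
    rw [intervalIntegral.integral_congr
      (g := fun u : ℝ => if u ≤ ((k:ℝ)/n + ((k:ℝ)+1)/n)/2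
        then (4 * (h (((k:ℝ)+1)/n) - h ((k:ℝ)/n)) * (n:ℝ)^2) * (u - (k:ℝ)/n)
        else (4 * (h (((k:ℝ)+1)/n) - h ((k:ℝ)/n)) * (n:ℝ)^2) * (((k:ℝ)+1)/n - u))
      (fun u hu => by
        rw [Set.uIcc_of_le hax] at hu
        exact hcell k hk0 u hu.1 (hu.2.trans hxb))]
    exact aux_tent _ _ _ x (hab k) hax hxb
  -- main induction on grid points
  have key : ∀ k : ℕ, hn' ((k:ℝ)/n) = 0 ∧ hnf ((k:ℝ)/n) = h ((k:ℝ)/n) ∧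
      IntervalIntegrable hn' volume 0 ((k:ℝ)/n) := by
    intro k
    induction k with
    | zero =>
      have hz : ((0:ℕ):ℝ)/n = 0 := by norm_num
      refine ⟨?_, ?_, ?_⟩
      · rw [hz, hhn', intervalIntegral.integral_same]
      · rw [hz, hhnf, intervalIntegral.integral_same]; exact h0.symm
      · rw [hz]
    | succ k ih =>
      obtain ⟨ih1, ih2, ih3⟩ := ih
      have hsucc : (((k+1:ℕ)):ℝ)/n = ((k:ℝ)+1)/n := by push_cast; ring
      have h1 : hn' (((k:ℝ)+1)/n) = 0 := by
        rw [hcell k ih1 _ (hab k).le le_rfl, if_neg (not_le.mpr (hmb k)), sub_self, mul_zero]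
      have h2 : hnf (((k:ℝ)+1)/n) = h (((k:ℝ)+1)/n) := by
        rw [cellF k ih1 ih2 ih3 _ (hab k).le le_rfl, if_neg (not_le.mpr (hmb k)),
          show ((k:ℝ)+1)/n - (k:ℝ)/n = 1/n by ring]
        field_simp
        ring
      refine ⟨by rw [hsucc]; exact h1, by rw [hsucc]; exact h2, ?_⟩
      rw [hsucc]
      exact ih3.trans (cellInt k ih1 _ (hab k).le le_rfl)
  refine ⟨fun k => (key k).1, fun k => (key k).2.1, ?_, ?_, ?_⟩
  · -- |hn'| ≤ 2L
    intro x hx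
    set k := ⌊(n:ℝ)*x⌋₊ with hk
    have hnx0 : (0:ℝ) ≤ (n:ℝ)*x := by positivity
    have hax : (k:ℝ)/n ≤ x := by
      rw [div_le_iff₀ hn0, mul_comm]; exact Nat.floor_le hnx0
    have hxb : x < ((k:ℝ)+1)/n := by
      rw [lt_div_iff₀ hn0, mul_comm]; exact Nat.lt_floor_add_one ((n:ℝ)*x)
    have hhalf : ∀ y : ℝ, 0 ≤ y → y ≤ 1/(2*(n:ℝ)) →
        |4 * (h (((k:ℝ)+1)/n) - h ((k:ℝ)/n)) * (n:ℝ)^2| * y ≤ 2*L := by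
      intro y hy0 hy1
      have e : (4*L*(n:ℝ)) * (1/(2*(n:ℝ))) = 2*L := by field_simp; ring
      nlinarith [habs k, abs_nonneg (4 * (h (((k:ℝ)+1)/n) - h ((k:ℝ)/n)) * (n:ℝ)^2),
        mul_le_mul (habs k) hy1 hy0 (by positivity : (0:ℝ) ≤ 4*L*(n:ℝ))]
    rw [hcell k (key k).1 x hax hxb.le]
    by_cases hxm : x ≤ ((k:ℝ)/n + ((k:ℝ)+1)/n)/2
    · rw [if_pos hxm, abs_mul, abs_of_nonneg (sub_nonneg.mpr hax)]
      refine hhalf _ (sub_nonneg.mpr hax) ?_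
      have : ((k:ℝ)/n + ((k:ℝ)+1)/n)/2 - (k:ℝ)/n = 1/(2*(n:ℝ)) := by field_simp; ring
      linarith
    · push_neg at hxm
      rw [if_neg (not_le.mpr hxm), abs_mul, abs_of_nonneg (sub_nonneg.mpr hxb.le)]
      refine hhalf _ (sub_nonneg.mpr hxb.le) ?_
      have : ((k:ℝ)+1)/n - ((k:ℝ)/n + ((k:ℝ)+1)/n)/2 = 1/(2*(n:ℝ)) := by field_simp; ring
      linarith
  · -- |D| ≤ 4Ln²
    intro x hx
    rw [hD x hx, abs_mul]
    have h1 : |(if (n:ℝ)*x - (⌊(n:ℝ)*x⌋₊:ℝ) ≤ 1/2 then (1:ℝ) else -1)| = 1 := by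
      split <;> norm_num
    rw [h1, one_mul]
    calc |4 * (h (((⌊(n:ℝ)*x⌋₊:ℝ)+1)/n) - h ((⌊(n:ℝ)*x⌋₊:ℝ)/n)) * (n:ℝ)^2| ≤ 4*L*(n:ℝ) :=
          habs _
      _ ≤ 4*L*(n:ℝ)^2 := by nlinarith [mul_nonneg (mul_nonneg hL hn0.le) (sub_nonneg.mpr hone)]
  · -- error bound
    intro x hx
    set k := ⌊(n:ℝ)*x⌋₊ with hk
    have hnx0 : (0:ℝ) ≤ (n:ℝ)*x := by positivity
    have hax : (k:ℝ)/n ≤ x := by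
      rw [div_le_iff₀ hn0, mul_comm]; exact Nat.floor_le hnx0
    have hxb : x < ((k:ℝ)+1)/n := by
      rw [lt_div_iff₀ hn0, mul_comm]; exact Nat.lt_floor_add_one ((n:ℝ)*x)
    have hna : (n:ℝ) * ((k:ℝ)/n) = (k:ℝ) := by field_simp
    have hnb : (n:ℝ) * (((k:ℝ)+1)/n) = (k:ℝ)+1 := by field_simp
    have hnm : (n:ℝ) * (((k:ℝ)/n + ((k:ℝ)+1)/n)/2) = (k:ℝ) + 1/2 := by field_simp; ring
    have hf := cellF k (key k).1 (key k).2.1 (key k).2.2 x hax hxb.le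
    set q : ℝ := if x ≤ ((k:ℝ)/n + ((k:ℝ)+1)/n)/2
      then 2*(n:ℝ)^2*(x - (k:ℝ)/n)^2 else 1 - 2*(n:ℝ)^2*(((k:ℝ)+1)/n - x)^2 with hqdef
    have hq : hnf x = h ((k:ℝ)/n) + (h (((k:ℝ)+1)/n) - h ((k:ℝ)/n)) * q := by
      rw [hf, hqdef]
      by_cases hxm : x ≤ ((k:ℝ)/n + ((k:ℝ)+1)/n)/2
      · rw [if_pos hxm, if_pos hxm]; ring
      · rw [if_neg hxm, if_neg hxm, show ((k:ℝ)+1)/n - (k:ℝ)/n = 1/n by ring]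
        field_simp
        ring
    clear hf
    have hq0 : 0 ≤ q := by
      rw [hqdef]
      by_cases hxm : x ≤ ((k:ℝ)/n + ((k:ℝ)+1)/n)/2
      · rw [if_pos hxm]; positivity
      · push_neg at hxm
        rw [if_neg (not_le.mpr hxm)]
        have h1 : (n:ℝ)*(((k:ℝ)+1)/n - x) ≤ 1/2 := by
          have := mul_lt_mul_of_pos_left hxm hn0
          rw [hnm] at this
          have h2 : (n:ℝ)*(((k:ℝ)+1)/n) = (k:ℝ)+1 := hnb
          nlinarith
        have h2 : 0 ≤ (n:ℝ)*(((k:ℝ)+1)/n - x) := by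
          have := sub_nonneg.mpr hxb.le; positivity
        nlinarith [mul_le_mul h1 h1 h2 (by norm_num : (0:ℝ) ≤ 1/2)]
    have hq1 : q ≤ 1 := by
      rw [hqdef]
      by_cases hxm : x ≤ ((k:ℝ)/n + ((k:ℝ)+1)/n)/2
      · rw [if_pos hxm]
        have h1 : (n:ℝ)*(x - (k:ℝ)/n) ≤ 1/2 := by
          have := mul_le_mul_of_nonneg_left hxm hn0.le
          rw [hnm] at this
          nlinarith
        have h2 : 0 ≤ (n:ℝ)*(x - (k:ℝ)/n) := by
          have := sub_nonneg.mpr hax; positivity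
        nlinarith [mul_le_mul h1 h1 h2 (by norm_num : (0:ℝ) ≤ 1/2)]
      · rw [if_neg hxm]
        nlinarith [sq_nonneg (((k:ℝ)+1)/n - x), sq_nonneg (n:ℝ)]
    have hxa0 : (0:ℝ) ≤ x - (k:ℝ)/n := sub_nonneg.mpr hax
    have hbx0 : (0:ℝ) ≤ ((k:ℝ)+1)/n - x := sub_nonneg.mpr hxb.le
    have b1 : |h x - h ((k:ℝ)/n)| ≤ L * (x - (k:ℝ)/n) := by
      have := hlip x ((k:ℝ)/n) hx (by positivity)
      rwa [abs_of_nonneg hxa0] at this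
    have b2 : |h x - h (((k:ℝ)+1)/n)| ≤ L * (((k:ℝ)+1)/n - x) := by
      have ht := hlip x (((k:ℝ)+1)/n) hx (by positivity)
      rwa [show |x - ((k:ℝ)+1)/n| = ((k:ℝ)+1)/n - x from by
        rw [abs_sub_comm, abs_of_nonneg hbx0]] at ht
    have e1 : h x - hnf x = (1-q)*(h x - h ((k:ℝ)/n)) + q*(h x - h (((k:ℝ)+1)/n)) := by
      rw [hq]; ring
    have hxa1 : x - (k:ℝ)/n ≤ 1/n := by
      have : ((k:ℝ)+1)/n - (k:ℝ)/n = 1/n := by ring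
      linarith
    have hbx1 : ((k:ℝ)+1)/n - x ≤ 1/n := by
      have : ((k:ℝ)+1)/n - (k:ℝ)/n = 1/n := by ring
      linarith
    calc |h x - hnf x| ≤ (1-q)*|h x - h ((k:ℝ)/n)| + q*|h x - h (((k:ℝ)+1)/n)| := by
          rw [e1]
          refine (abs_add_le _ _).trans ?_
          rw [abs_mul, abs_mul, abs_of_nonneg (by linarith : (0:ℝ) ≤ 1-q), abs_of_nonneg hq0]
      _ ≤ (1-q)*(L*(x - (k:ℝ)/n)) + q*(L*(((k:ℝ)+1)/n - x)) := by
          gcongr <;> linarith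
      _ ≤ L/n := by
          have c1 : (0:ℝ) ≤ (1-q)*(L*(1/n - (x - (k:ℝ)/n))) := by
            apply mul_nonneg (by linarith) (mul_nonneg hL (by linarith))
          have c2 : (0:ℝ) ≤ q*(L*(1/n - (((k:ℝ)+1)/n - x))) := by
            apply mul_nonneg hq0 (mul_nonneg hL (by linarith))
          have : L/n = L*(1/n) := by ring
          nlinarith
end

section
/- Let φ and φ^N be characteristic-type functions (φ(a−ib) = E[e^{(a−ib)X}], φ^N(a−ib) = E[e^{(a−ib)X^N}] for real a ∈ [0,1], b ∈ ℝ), and suppose there are constants C₀ > 0 and e_N ≥ 0 such that whenever C₀(1+b⁶)e_N ≤ 1 one has |φ(a−ib) − φ^N(a−ib)| ≤ 6C₀ φ(a)(1+b⁶) e_N. Let f̂ satisfy |f̂(b+ia)| ≤ C₁(1+|b|)^{−(1+δ)} for some C₁, δ > 0 with δ < 6, and assume the Fourier pricing identity E f(X) = (1/2π)∫_ℝ φ(a−iu) f̂(u+ia) du holds for both X and X^N. Then for L := e_N^{−1/(6+η)} with any η > 0 such that C₀(1+L⁶)e_N ≤ 1, one has |E f(X) − E f(X^N)| ≤ (1/2π)[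 (2⁷·6C₀ C₁ φ(a) /(6−δ)) e_N^{(δ+η)/(6+η)} + (4C₁/δ)(3C₀+1)·2·φ(a) L^{−δ} ], and consequently |E f(X) − E f(X^N)| ≤ C e_N^{δ/(6+η)} for a constant C depending only on C₀, C₁, δ, φ(a). -/
/-!
The Fourier pricing identity bounds the weak error by `(1/2π) ∫ |φ - φN| |f̂|` along the line
`Im = a`. On `|b| ≤ L` the smallness condition holds, so the error bound for `φ - φN` and
`(1 + b⁶)(1 + |b|)^(-(1+δ)) ≤ (1 + |b|)^(5-δ)` contribute `O(eN L^(6-δ)) = O(eN^((δ+η)/(6+η)))`;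
on `|b| > L` the crude bound `|φ - φN| ≤ (6C₀ + 2) φ(a)` and the decay of `f̂` contribute
`O(L^(-δ)) = O(eN^(δ/(6+η)))`.
-/

open MeasureTheory Set Filter Topology

lemma one_add_pow_mul_rpow_le {n : ℕ} (hn : n ≠ 0) (b r : ℝ) :
    (1 + b ^ n) * (1 + |b|) ^ r ≤ (1 + |b|) ^ (n + r) := by
  have h : 1 + b ^ n ≤ (1 + |b|) ^ n := calc
    1 + b ^ n ≤ 1 ^ n + |b| ^ n := by
      rw [one_pow, ← abs_pow]; exact add_le_add_right (le_abs_self _) 1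
    _ ≤ (1 + |b|) ^ n := pow_add_pow_le zero_le_one (abs_nonneg b) hn
  rw [Real.rpow_add (by positivity), Real.rpow_natCast]
  exact mul_le_mul_of_nonneg_right h (by positivity)

lemma one_add_rpow_le_two_pow_mul_rpow {L s : ℝ} {n : ℕ} (hL : 1 ≤ L) (hs : 0 ≤ s)
    (hsn : s ≤ n) : (1 + L) ^ s ≤ 2 ^ n * L ^ s := calc
  (1 + L) ^ s ≤ (2 * L) ^ s := Real.rpow_le_rpow (by linarith) (by linarith) hs
  _ = 2 ^ s * L ^ s := Real.mul_rpow zero_le_two (by linarith)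
  _ ≤ 2 ^ (n : ℝ) * L ^ s := by gcongr; exact one_le_two
  _ = 2 ^ n * L ^ s := by rw [Real.rpow_natCast]

lemma rpow_neg_inv_rpow_mul_self {x κ : ℝ} (hx : 0 < x) (hκ : κ ≠ 0) (s : ℝ) :
    (x ^ (-(1 / κ))) ^ s * x = x ^ ((κ - s) / κ) := by
  rw [← Real.rpow_mul hx.le]
  nth_rw 2 [← Real.rpow_one x]
  rw [← Real.rpow_add hx]
  congr 1
  field_simp
  ring

lemma integrable_one_add_abs_rpow_neg {δ : ℝ} (hδ : 0 < δ) :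
    Integrable (fun x : ℝ => (1 + |x|) ^ (-(1 + δ))) := by
  simpa using integrable_one_add_norm (E := ℝ) (μ := volume) (r := 1 + δ) (by simpa)

lemma integral_Ioi_one_add_rpow_neg {δ c : ℝ} (hδ : 0 < δ) (hc : -1 < c) :
    ∫ x in Ioi c, (1 + x) ^ (-(1 + δ)) = (1 + c) ^ (-δ) / δ := by
  have hderiv : ∀ x ∈ Ici c,
      HasDerivAt (fun t : ℝ => -(1 + t) ^ (-δ) / δ) ((1 + x) ^ (-(1 + δ))) x := by
    intro x hx
    convert! ((((hasDerivAt_id' x).const_add 1).rpow_const (p := -δ)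
      (Or.inl (by linarith [mem_Ici.mp hx]))).div_const δ).neg using 1
    · ext t; simp [neg_div]
    · rw [show -δ - 1 = -(1 + δ) by ring]; field_simp
  have hint : IntegrableOn (fun x : ℝ => (1 + x) ^ (-(1 + δ))) (Ioi c) := by
    simpa [add_comm] using integrableOn_add_rpow_Ioi_of_lt (m := 1) (by linarith) (by linarith)
  have htend : Tendsto (fun t : ℝ => -(1 + t) ^ (-δ) / δ) atTop (𝓝 (-0 / δ)) :=
    ((tendsto_rpow_neg_atTop hδ).comp (tendsto_atTop_add_const_left _ 1 tendsto_id)).neg.div_const δ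
  rw [integral_Ioi_of_hasDerivAt_of_tendsto' hderiv hint htend]
  ring

lemma integral_one_add_abs_rpow_neg {δ : ℝ} (hδ : 0 < δ) :
    ∫ x : ℝ, (1 + |x|) ^ (-(1 + δ)) = 2 / δ := by
  rw [integral_comp_abs (f := fun t => (1 + t) ^ (-(1 + δ))),
    integral_Ioi_one_add_rpow_neg hδ (by norm_num)]
  simp [div_eq_mul_inv]

lemma integral_Icc_one_add_abs_rpow {p L : ℝ} (hp : p ≠ -1) (hL : 0 ≤ L) :
    ∫ x in Icc (-L) L, (1 + |x|) ^ p = 2 * ((1 + L) ^ (p + 1) - 1) / (p + 1) := by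
  have hcont : Continuous (fun x : ℝ => (1 + |x|) ^ p) :=
    (continuous_const.add continuous_abs).rpow_const
      fun x => Or.inl (by positivity : (0:ℝ) < 1 + |x|).ne'
  have hhalf : ∫ x in (0:ℝ)..L, (1 + |x|) ^ p = ((1 + L) ^ (p + 1) - 1) / (p + 1) := by
    rw [intervalIntegral.integral_congr (g := fun x => (1 + x) ^ p) fun x hx => by
        rw [uIcc_of_le hL] at hx; simp [abs_of_nonneg hx.1],
      intervalIntegral.integral_comp_add_left (fun u => u ^ p),
      integral_rpow (Or.inr ⟨hp, by rw [uIcc_of_le (by linarith)]; simp⟩)]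
    simp
  have hsym : ∫ x in (-L)..0, (1 + |x|) ^ p = ∫ x in (0:ℝ)..L, (1 + |x|) ^ p := by
    simpa using (intervalIntegral.integral_comp_neg (a := 0) (b := L)
      (fun x : ℝ => (1 + |x|) ^ p)).symm
  rw [integral_Icc_eq_integral_Ioc, ← intervalIntegral.integral_of_le (by linarith),
    ← intervalIntegral.integral_add_adjacent_intervals (hcont.intervalIntegrable _ 0)
      (hcont.intervalIntegrable 0 _), hsym, hhalf]
  ring

lemma integral_compl_Icc_one_add_abs_rpow_neg {δ L : ℝ} (hδ : 0 < δ) (hL : 0 ≤ L) :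
    ∫ x in (Icc (-L) L)ᶜ, (1 + |x|) ^ (-(1 + δ)) = 2 * (1 + L) ^ (-δ) / δ := by
  have h := integral_add_compl (s := Icc (-L) L) measurableSet_Icc
    (integrable_one_add_abs_rpow_neg hδ)
  rw [integral_one_add_abs_rpow_neg hδ, integral_Icc_one_add_abs_rpow (by linarith) hL,
    show -(1 + δ) + 1 = -δ by ring] at h
  field_simp at h ⊢
  linarith

lemma integral_le_of_bound_on_Icc_of_decay {h : ℝ → ℝ} (hh : Integrable h) {M K p δ L : ℝ}
    (hp : p ≠ -1) (hδ : 0 < δ) (hL : 0 ≤ L)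
    (hnear : ∀ b ∈ Icc (-L) L, h b ≤ M * (1 + |b|) ^ p)
    (hfar : ∀ b, h b ≤ K * (1 + |b|) ^ (-(1 + δ))) :
    ∫ b, h b ≤ M * (2 * ((1 + L) ^ (p + 1) - 1) / (p + 1)) + K * (2 * (1 + L) ^ (-δ) / δ) := by
  have hcont : Continuous (fun b : ℝ => M * (1 + |b|) ^ p) :=
    continuous_const.mul <| (continuous_const.add continuous_abs).rpow_const
      fun b => Or.inl (by positivity : (0:ℝ) < 1 + |b|).ne'
  rw [← integral_add_compl measurableSet_Icc hh,
    ← integral_Icc_one_add_abs_rpow hp hL, ← integral_const_mul,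
    ← integral_compl_Icc_one_add_abs_rpow_neg hδ hL, ← integral_const_mul]
  exact add_le_add
    (setIntegral_mono_on hh.integrableOn hcont.integrableOn_Icc measurableSet_Icc hnear)
    (setIntegral_mono hh.integrableOn
      ((integrable_one_add_abs_rpow_neg hδ).const_mul K).integrableOn hfar)

section FourierDifference

variable {ψ ψN F : ℝ → ℂ} {C₀ C₁ δ eN φa L : ℝ}

lemma norm_sub_mul_le_of_decay (hψ : ∀ b, ‖ψ b‖ ≤ φa)
    (hψN : ∀ b, ‖ψN b‖ ≤ (6 * C₀ + 1) * φa)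
    (hF : ∀ b, ‖F b‖ ≤ C₁ * (1 + |b|) ^ (-(1 + δ))) (b : ℝ) :
    ‖(ψ b - ψN b) * F b‖ ≤ (6 * C₀ + 2) * φa * C₁ * (1 + |b|) ^ (-(1 + δ)) := by
  have hsub : ‖ψ b - ψN b‖ ≤ (6 * C₀ + 2) * φa := by
    linarith [norm_sub_le (ψ b) (ψN b), hψ b, hψN b]
  rw [norm_mul, mul_assoc _ C₁]
  exact mul_le_mul hsub (hF b) (norm_nonneg _) ((norm_nonneg _).trans hsub)

lemma norm_sub_mul_le_of_mem_Icc (hC₀ : 0 ≤ C₀) (hC₁ : 0 ≤ C₁) (heN : 0 ≤ eN) (hφa : 0 ≤ φa)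
    (herr : ∀ b : ℝ, C₀ * (1 + b ^ 6) * eN ≤ 1 → ‖ψ b - ψN b‖ ≤ 6 * C₀ * φa * (1 + b ^ 6) * eN)
    (hF : ∀ b, ‖F b‖ ≤ C₁ * (1 + |b|) ^ (-(1 + δ)))
    (hsmall : C₀ * (1 + L ^ 6) * eN ≤ 1) {b : ℝ} (hb : b ∈ Icc (-L) L) :
    ‖(ψ b - ψN b) * F b‖ ≤ 6 * C₀ * φa * eN * C₁ * (1 + |b|) ^ (5 - δ) := by
  have hb6 : b ^ 6 ≤ L ^ 6 := by
    rw [← Even.pow_abs (by decide)]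
    exact pow_le_pow_left₀ (abs_nonneg b) (abs_le.mpr hb) 6
  have hsub := herr b (le_trans (by gcongr) hsmall)
  calc ‖(ψ b - ψN b) * F b‖
      ≤ 6 * C₀ * φa * (1 + b ^ 6) * eN * (C₁ * (1 + |b|) ^ (-(1 + δ))) := by
        rw [norm_mul]; exact mul_le_mul hsub (hF b) (norm_nonneg _) ((norm_nonneg _).trans hsub)
    _ = 6 * C₀ * φa * eN * C₁ * ((1 + b ^ 6) * (1 + |b|) ^ (-(1 + δ))) := by ring
    _ ≤ 6 * C₀ * φa * eN * C₁ * (1 + |b|) ^ (5 - δ) := by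
        have h6 := one_add_pow_mul_rpow_le (n := 6) (by norm_num) b (-(1 + δ))
        rw [show ((6 : ℕ) : ℝ) + -(1 + δ) = 5 - δ by push_cast; ring] at h6
        gcongr

theorem integral_norm_sub_mul_le (hint : Integrable fun b => (ψ b - ψN b) * F b)
    (hC₀ : 0 ≤ C₀) (hC₁ : 0 ≤ C₁) (hδ : 0 < δ) (hδ6 : δ < 6) (heN : 0 ≤ eN) (hL : 0 < L)
    (hφa : 0 ≤ φa) (hsmall : C₀ * (1 + L ^ 6) * eN ≤ 1)
    (hψ : ∀ b, ‖ψ b‖ ≤ φa) (hψN : ∀ b, ‖ψN b‖ ≤ (6 * C₀ + 1) * φa)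
    (herr : ∀ b : ℝ, C₀ * (1 + b ^ 6) * eN ≤ 1 → ‖ψ b - ψN b‖ ≤ 6 * C₀ * φa * (1 + b ^ 6) * eN)
    (hF : ∀ b, ‖F b‖ ≤ C₁ * (1 + |b|) ^ (-(1 + δ))) :
    ∫ b, ‖(ψ b - ψN b) * F b‖ ≤
      2 ^ 7 * 6 * C₀ * C₁ * φa / (6 - δ) * (L ^ (6 - δ) * eN) +
        4 * C₁ / δ * (3 * C₀ + 1) * 2 * φa * L ^ (-δ) := by
  have h6δ : 0 < 6 - δ := by linarith
  have hfar := norm_sub_mul_le_of_decay hψ hψN hF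
  have hK2 : 0 ≤ (6 * C₀ + 2) * φa * C₁ * (2 * L ^ (-δ) / δ) := by positivity
  have hfar_term : (6 * C₀ + 2) * φa * C₁ * (2 * L ^ (-δ) / δ) ≤
      4 * C₁ / δ * (3 * C₀ + 1) * 2 * φa * L ^ (-δ) := by
    linarith [show 4 * C₁ / δ * (3 * C₀ + 1) * 2 * φa * L ^ (-δ) =
      2 * ((6 * C₀ + 2) * φa * C₁ * (2 * L ^ (-δ) / δ)) by ring]
  rcases lt_or_ge L 1 with hL1 | hL1
  · -- for `L < 1` the decay of `F` alone suffices, as `L ^ (-δ) ≥ 1`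
    have hLδ : 1 ≤ L ^ (-δ) :=
      Real.one_le_rpow_of_pos_of_le_one_of_nonpos hL hL1.le (by linarith)
    have h := integral_mono hint.norm ((integrable_one_add_abs_rpow_neg hδ).const_mul _) hfar
    rw [integral_const_mul, integral_one_add_abs_rpow_neg hδ] at h
    calc ∫ b, ‖(ψ b - ψN b) * F b‖ ≤ (6 * C₀ + 2) * φa * C₁ * (2 * 1 / δ) := by simpa using h
      _ ≤ (6 * C₀ + 2) * φa * C₁ * (2 * L ^ (-δ) / δ) := by gcongr
      _ ≤ _ := le_add_of_nonneg_of_le (by positivity) hfar_term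
  · have h := integral_le_of_bound_on_Icc_of_decay hint.norm (by linarith) hδ hL.le
      (fun b hb => norm_sub_mul_le_of_mem_Icc hC₀ hC₁ heN hφa herr hF hsmall hb) hfar
    rw [show 5 - δ + 1 = 6 - δ by ring] at h
    have hnear : (1 + L) ^ (6 - δ) ≤ 2 ^ 6 * L ^ (6 - δ) :=
      one_add_rpow_le_two_pow_mul_rpow hL1 (by linarith) (by push_cast; linarith)
    have hLδ : (1 + L) ^ (-δ) ≤ L ^ (-δ) :=
      Real.rpow_le_rpow_of_nonpos hL (by linarith) (by linarith)
    refine h.trans (add_le_add ?_ (le_trans ?_ hfar_term))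
    · calc 6 * C₀ * φa * eN * C₁ * (2 * ((1 + L) ^ (6 - δ) - 1) / (6 - δ))
          ≤ 6 * C₀ * φa * eN * C₁ * (2 ^ 7 * L ^ (6 - δ) / (6 - δ)) := by
            gcongr ?_ * (?_ / _)
            linarith
        _ = _ := by ring
    · gcongr

end FourierDifference

lemma abs_sub_le_integral_norm_sub_mul {x y c : ℝ} (hc : 0 ≤ c) {u v F : ℝ → ℂ}
    (hu : Integrable fun b => u b * F b) (hv : Integrable fun b => v b * F b)
    (hx : (x : ℂ) = c * ∫ b, u b * F b) (hy : (y : ℂ) = c * ∫ b, v b * F b) :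
    |x - y| ≤ c * ∫ b, ‖(u b - v b) * F b‖ := by
  have hxy : ((x - y : ℝ) : ℂ) = c * ∫ b, (u b - v b) * F b := by
    simp_rw [sub_mul]
    rw [integral_sub hu hv, mul_sub, ← hx, ← hy]
    push_cast
    ring
  rw [← Real.norm_eq_abs, ← Complex.norm_real, hxy, norm_mul, Complex.norm_real,
    Real.norm_of_nonneg hc]
  gcongr
  exact norm_integral_le_integral_norm _

theorem weak_error_fourier_bound_general {Ω : Type*} [MeasurableSpace Ω]
    (μ : Measure Ω) [IsProbabilityMeasure μ]
    (X XN : Ω → ℝ) (f : ℝ → ℝ) (fhat φ φN : ℂ → ℂ)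
    (a C₀ C₁ δ η eN φa L : ℝ)
    (hC₀ : 0 < C₀) (hC₁ : 0 < C₁) (hδ : 0 < δ) (hδ6 : δ < 6) (hη : 0 < η)
    (heN : 0 < eN)
    (hLdef : L = eN ^ (-(1 / (6 + η))))
    (hsmall : C₀ * (1 + L ^ 6) * eN ≤ 1)
    (hφa : 0 ≤ φa)
    (hφbound : ∀ b : ℝ, ‖φ ((a : ℂ) - (b : ℂ) * Complex.I)‖ ≤ φa)
    (hφNbound : ∀ b : ℝ,
      ‖φN ((a : ℂ) - (b : ℂ) * Complex.I)‖ ≤ (6 * C₀ + 1) * φa)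
    (herr : ∀ b : ℝ, C₀ * (1 + b ^ 6) * eN ≤ 1 →
      ‖φ ((a : ℂ) - (b : ℂ) * Complex.I) -
          φN ((a : ℂ) - (b : ℂ) * Complex.I)‖ ≤
        6 * C₀ * φa * (1 + b ^ 6) * eN)
    (hfhat : ∀ b : ℝ,
      ‖fhat ((b : ℂ) + (a : ℂ) * Complex.I)‖ ≤ C₁ * (1 + |b|) ^ (-(1 + δ)))
    (hint : Integrable (fun b : ℝ =>
      φ ((a : ℂ) - (b : ℂ) * Complex.I) * fhat ((b : ℂ) + (a : ℂ) * Complex.I)))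
    (hintN : Integrable (fun b : ℝ =>
      φN ((a : ℂ) - (b : ℂ) * Complex.I) * fhat ((b : ℂ) + (a : ℂ) * Complex.I)))
    (hpr : ((∫ ω, f (X ω) ∂μ : ℝ) : ℂ) = (1 / (2 * (Real.pi : ℂ))) *
      ∫ b : ℝ, φ ((a : ℂ) - (b : ℂ) * Complex.I) * fhat ((b : ℂ) + (a : ℂ) * Complex.I))
    (hprN : ((∫ ω, f (XN ω) ∂μ : ℝ) : ℂ) = (1 / (2 * (Real.pi : ℂ))) *
      ∫ b : ℝ, φN ((a : ℂ) - (b : ℂ) * Complex.I) * fhat ((b : ℂ) + (a : ℂ) * Complex.I)) :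
    |(∫ ω, f (X ω) ∂μ) - ∫ ω, f (XN ω) ∂μ| ≤
      (1 / (2 * Real.pi)) *
        ((2 ^ 7 * 6 * C₀ * C₁ * φa / (6 - δ)) * eN ^ ((δ + η) / (6 + η)) +
          (4 * C₁ / δ) * (3 * C₀ + 1) * 2 * φa * L ^ (-δ)) ∧
      ∃ C : ℝ, 0 ≤ C ∧
        |(∫ ω, f (X ω) ∂μ) - ∫ ω, f (XN ω) ∂μ| ≤ C * eN ^ (δ / (6 + η)) := by
  have h6δ : 0 < 6 - δ := by linarith
  have hκ : 6 + η ≠ 0 := by positivity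
  have hL : 0 < L := hLdef ▸ Real.rpow_pos_of_pos heN _
  have hLδ : L ^ (-δ) = eN ^ (δ / (6 + η)) := by
    rw [hLdef, ← Real.rpow_mul heN.le]; congr 1; field_simp
  have hnear : L ^ (6 - δ) * eN = eN ^ ((δ + η) / (6 + η)) := by
    rw [hLdef, rpow_neg_inv_rpow_mul_self heN hκ]; congr 1; ring
  -- the smallness condition at `b = L` says `eN ^ (η / (6 + η)) = L ^ 6 * eN ≤ 1 / C₀`
  have hsplit : eN ^ ((δ + η) / (6 + η)) = eN ^ (δ / (6 + η)) * (L ^ 6 * eN) := by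
    rw [← Real.rpow_natCast, hLdef, rpow_neg_inv_rpow_mul_self heN hκ, ← Real.rpow_add heN]
    congr 1; push_cast; field_simp; ring
  have hq : L ^ 6 * eN ≤ 1 / C₀ := by rw [le_div_iff₀ hC₀]; nlinarith
  have hdiff : Integrable fun b : ℝ => (φ ((a : ℂ) - (b : ℂ) * Complex.I) -
      φN ((a : ℂ) - (b : ℂ) * Complex.I)) * fhat ((b : ℂ) + (a : ℂ) * Complex.I) :=
    (hint.sub hintN).congr (ae_of_all _ fun b => sub_mul _ _ _ |>.symm)
  have hmain : |(∫ ω, f (X ω) ∂μ) - ∫ ω, f (XN ω) ∂μ| ≤ (1 / (2 * Real.pi)) *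
      ((2 ^ 7 * 6 * C₀ * C₁ * φa / (6 - δ)) * eN ^ ((δ + η) / (6 + η)) +
        (4 * C₁ / δ) * (3 * C₀ + 1) * 2 * φa * L ^ (-δ)) := by
    rw [← hnear]
    refine (abs_sub_le_integral_norm_sub_mul (c := 1 / (2 * Real.pi)) (by positivity) hint
      hintN (by rw [hpr]; push_cast; ring) (by rw [hprN]; push_cast; ring)).trans ?_
    gcongr
    exact integral_norm_sub_mul_le hdiff hC₀.le hC₁.le hδ hδ6 heN.le hL hφa hsmall hφbound
      hφNbound herr hfhat
  refine ⟨hmain, 1 / (2 * Real.pi) * (2 ^ 7 * 6 * C₀ * C₁ * φa / (6 - δ) / C₀ +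
    4 * C₁ / δ * (3 * C₀ + 1) * 2 * φa), by positivity, hmain.trans ?_⟩
  calc _ ≤ 1 / (2 * Real.pi) * (2 ^ 7 * 6 * C₀ * C₁ * φa / (6 - δ) *
        (eN ^ (δ / (6 + η)) * (1 / C₀)) +
        4 * C₁ / δ * (3 * C₀ + 1) * 2 * φa * eN ^ (δ / (6 + η))) := by
          rw [hsplit, hLδ]; gcongr
    _ = _ := by ring

/-- Weak error bound via Fourier pricing: if the characteristic-type functions `φ, φN`
of `X, XN` are close (with polynomial weight), the damped Fourier transform of the payoff
decays like `(1+|b|)^{-(1+δ)}`, and the Fourier pricing identity holds, then the weak error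
is bounded by the stated combination of `e_N` powers, with cutoff `L = e_N^{-1/(6+η)}`. -/
theorem weak_error_fourier_bound {Ω : Type*} [MeasurableSpace Ω]
    (μ : Measure Ω) [IsProbabilityMeasure μ]
    (X XN : Ω → ℝ) (f : ℝ → ℝ) (fhat φ φN : ℂ → ℂ)
    (a C₀ C₁ δ η eN φa L : ℝ)
    (ha : a ∈ Set.Icc (0:ℝ) 1)
    (hC₀ : 0 < C₀) (hC₁ : 0 < C₁) (hδ : 0 < δ) (hδ6 : δ < 6) (hη : 0 < η)
    (heN : 0 < eN)
    (hLdef : L = eN ^ (-(1 / (6 + η))))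
    (hsmall : C₀ * (1 + L ^ 6) * eN ≤ 1)
    (hφa : 0 ≤ φa)
    (hφbound : ∀ b : ℝ, ‖φ ((a : ℂ) - (b : ℂ) * Complex.I)‖ ≤ φa)
    (hφNbound : ∀ b : ℝ,
      ‖φN ((a : ℂ) - (b : ℂ) * Complex.I)‖ ≤ (6 * C₀ + 1) * φa)
    (herr : ∀ b : ℝ, C₀ * (1 + b ^ 6) * eN ≤ 1 →
      ‖φ ((a : ℂ) - (b : ℂ) * Complex.I) -
          φN ((a : ℂ) - (b : ℂ) * Complex.I)‖ ≤
        6 * C₀ * φa * (1 + b ^ 6) * eN)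
    (hfhat : ∀ b : ℝ,
      ‖fhat ((b : ℂ) + (a : ℂ) * Complex.I)‖ ≤ C₁ * (1 + |b|) ^ (-(1 + δ)))
    (hint : Integrable (fun b : ℝ =>
      φ ((a : ℂ) - (b : ℂ) * Complex.I) * fhat ((b : ℂ) + (a : ℂ) * Complex.I)))
    (hintN : Integrable (fun b : ℝ =>
      φN ((a : ℂ) - (b : ℂ) * Complex.I) * fhat ((b : ℂ) + (a : ℂ) * Complex.I)))
    (hpr : ((∫ ω, f (X ω) ∂μ : ℝ) : ℂ) = (1 / (2 * (Real.pi : ℂ))) *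
      ∫ b : ℝ, φ ((a : ℂ) - (b : ℂ) * Complex.I) * fhat ((b : ℂ) + (a : ℂ) * Complex.I))
    (hprN : ((∫ ω, f (XN ω) ∂μ : ℝ) : ℂ) = (1 / (2 * (Real.pi : ℂ))) *
      ∫ b : ℝ, φN ((a : ℂ) - (b : ℂ) * Complex.I) * fhat ((b : ℂ) + (a : ℂ) * Complex.I)) :
    |(∫ ω, f (X ω) ∂μ) - ∫ ω, f (XN ω) ∂μ| ≤
      (1 / (2 * Real.pi)) *
        ((2 ^ 7 * 6 * C₀ * C₁ * φa / (6 - δ)) * eN ^ ((δ + η) / (6 + η)) +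
          (4 * C₁ / δ) * (3 * C₀ + 1) * 2 * φa * L ^ (-δ)) ∧
      ∃ C : ℝ, 0 ≤ C ∧
        |(∫ ω, f (X ω) ∂μ) - ∫ ω, f (XN ω) ∂μ| ≤ C * eN ^ (δ / (6 + η)) :=
  weak_error_fourier_bound_general μ X XN f fhat φ φN a C₀ C₁ δ η eN φa L hC₀ hC₁ hδ hδ6 hη heN
    hLdef hsmall hφa hφbound hφNbound herr hfhat hint hintN hpr hprN
end

section
/- Let 0 < T and consider the recursion ξ_1 = a > 0, ξ_{i+1} = ((c + ξ_i^{κ/n})/(c − ξ_i^{κ/n}))² ξ_i for i = 1,…,n−1, where c > 1, κ > 0, and ξ_i^{κ/n} < c for all i. Define η^{(n)}_{i/n} := (1/n) log ξ_i. Then η^{(n)} satisfies the Euler-scheme recursion η^{(n)}_{(i+1)/n} = η^{(n)}_{i/n} + (2/n) log(1 + 2 e^{κ η^{(n)}_{i/n}} / (c − e^{κ η^{(n)}_{i/n}})) with initial value η^{(n)}_{1/n} = (1/n) log a. Moreover, if a ≤ 1, then since the vector field v(y) = 2 log(1 + 2e^{κy}/(c − e^{κy})) is nonnegative and increasing in y,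 the Euler iterates are dominated by the exact solution of dη_t/dt = v(η_t), η_0 = 0, evaluated at t = 1: η^{(n)}_1 ≤ η_1. -/
/-!
Since `ξ^{κ/n} = e^{κ η}` and `1 + 2x/(c - x) = (c + x)/(c - x)`, taking `(1/n) log` of the
recursion for `ξ` gives the Euler scheme with step `1/n` for `η' = v(η)` verbatim.
For the comparison, a solution of `η' = v(η)` with `v ≥ 0` increases, so its derivative
`v(η_t)` increases as well and the solution lies above each of its tangent lines:
`η_s + (t - s) v(η_s) ≤ η_t`. As `v` is increasing, an Euler step started below the solution
therefore stays below it; the start `(1/n) log a ≤ 0 = η_0 ≤ η_{1/n}` is where `a ≤ 1` enters.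
-/

open Set Real

section EulerComparison

theorem mul_sub_le_sub_of_hasDerivAt {f f' : ℝ → ℝ} {a b C : ℝ}
    (hf : ∀ t ∈ Icc a b, HasDerivAt f (f' t) t) (hC : ∀ t ∈ Icc a b, C ≤ f' t) :
    ∀ s ∈ Icc a b, ∀ t ∈ Icc a b, s ≤ t → C * (t - s) ≤ f t - f s := by
  refine (convex_Icc a b).mul_sub_le_image_sub_of_le_deriv
    (fun t ht => (hf t ht).continuousAt.continuousWithinAt)
    (fun t ht => (hf t (interior_subset ht)).differentiableAt.differentiableWithinAt)
    fun t ht => ?_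
  rw [(hf t (interior_subset ht)).deriv]
  exact hC t (interior_subset ht)

theorem monotoneOn_of_hasDerivAt_nonneg {f f' : ℝ → ℝ} {a b : ℝ}
    (hf : ∀ t ∈ Icc a b, HasDerivAt f (f' t) t) (hf' : ∀ t ∈ Icc a b, 0 ≤ f' t) :
    MonotoneOn f (Icc a b) := fun s hs t ht hst => by
  simpa using mul_sub_le_sub_of_hasDerivAt hf hf' s hs t ht hst

variable {v y : ℝ → ℝ} {S : Set ℝ}

theorem add_mul_le_of_hasDerivAt_comp {a b s t : ℝ} (hvS : MonotoneOn v S)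
    (hv : ∀ z ∈ S, 0 ≤ v z) (hy : ∀ t ∈ Icc a b, HasDerivAt y (v (y t)) t)
    (hyS : ∀ t ∈ Icc a b, y t ∈ S) (hs : s ∈ Icc a b) (ht : t ∈ Icc a b) (hst : s ≤ t) :
    y s + (t - s) * v (y s) ≤ y t := by
  have hmono : MonotoneOn y (Icc a b) :=
    monotoneOn_of_hasDerivAt_nonneg hy fun u hu => hv _ (hyS u hu)
  have hsub : Icc s t ⊆ Icc a b := Icc_subset_Icc hs.1 ht.2
  have hslope : ∀ u ∈ Icc s t, v (y s) ≤ v (y u) := fun u hu =>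
    hvS (hyS s hs) (hyS u (hsub hu)) (hmono hs (hsub hu) hu.1)
  have := mul_sub_le_sub_of_hasDerivAt (fun u hu => hy u (hsub hu)) hslope
    s (left_mem_Icc.2 hst) t (right_mem_Icc.2 hst) hst
  linarith

theorem euler_le_of_hasDerivAt_comp {x : ℕ → ℝ} {h : ℝ} {m N : ℕ} (hh : 0 ≤ h) (hmN : m ≤ N)
    (hvS : MonotoneOn v S) (hv : ∀ z ∈ S, 0 ≤ v z)
    (hy : ∀ t ∈ Icc (m * h) (N * h), HasDerivAt y (v (y t)) t)
    (hyS : ∀ t ∈ Icc (m * h) (N * h), y t ∈ S)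
    (hxS : ∀ k, m ≤ k → k < N → x k ∈ S)
    (hx : ∀ k, m ≤ k → k < N → x (k + 1) = x k + h * v (x k))
    (hinit : x m ≤ y (m * h)) :
    x N ≤ y (N * h) := by
  have htime : ∀ k, m ≤ k → k ≤ N → (k : ℝ) * h ∈ Icc (m * h) (N * h) := fun k hmk hkN =>
    ⟨by gcongr, by gcongr⟩
  suffices ∀ k, m ≤ k → k ≤ N → x k ≤ y (k * h) from this N hmN le_rfl
  intro k hmk
  induction k, hmk using Nat.le_induction with
  | base => exact fun _ => hinit
  | succ k hmk ih =>
    intro hkN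
    have hk := htime k hmk (by omega)
    have hk' := htime (k + 1) (by omega) hkN
    have hxy := ih (by omega)
    have hstep := add_mul_le_of_hasDerivAt_comp hvS hv hy hyS hk hk'
      (by push_cast; linarith)
    have hvxy : v (x k) ≤ v (y (k * h)) := hvS (hxS k hmk (by omega)) (hyS _ hk) hxy
    push_cast at hstep ⊢
    rw [hx k hmk (by omega)]
    nlinarith

end EulerComparison

section NodeField

noncomputable def nodeField (c κ y : ℝ) : ℝ :=
  2 * log (1 + 2 * exp (κ * y) / (c - exp (κ * y)))

variable {c κ : ℝ}

theorem nodeField_nonneg {y : ℝ} (hy : exp (κ * y) < c) : 0 ≤ nodeField c κ y := by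
  have hcy : 0 < c - exp (κ * y) := by linarith
  unfold nodeField
  have : 0 ≤ log (1 + 2 * exp (κ * y) / (c - exp (κ * y))) :=
    log_nonneg (le_add_of_nonneg_right (by positivity))
  linarith

theorem nodeField_monotoneOn (hκ : 0 ≤ κ) : MonotoneOn (nodeField c κ) {y | exp (κ * y) < c} := by
  intro y₁ _ y₂ hy₂ hy
  set u₁ := exp (κ * y₁)
  set u₂ := exp (κ * y₂)
  have hu : u₁ ≤ u₂ := exp_le_exp.2 (mul_le_mul_of_nonneg_left hy hκ)
  have hu₁ : 0 < u₁ := exp_pos _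
  have hc₂ : 0 < c - u₂ := sub_pos.2 hy₂
  have hc₁ : 0 < c - u₁ := by linarith
  have hfrac : 2 * u₁ / (c - u₁) ≤ 2 * u₂ / (c - u₂) := by
    rw [div_le_div_iff₀ hc₁ hc₂]
    nlinarith
  unfold nodeField
  gcongr

theorem log_sq_div_mul {x ξ : ℝ} (hx : 0 < x) (hxc : x < c) (hξ : 0 < ξ) :
    log (((c + x) / (c - x)) ^ 2 * ξ) = log ξ + 2 * log (1 + 2 * x / (c - x)) := by
  have hcx : 0 < c - x := by linarith
  have hfrac : 1 + 2 * x / (c - x) = (c + x) / (c - x) := by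
    field_simp
    ring
  rw [hfrac, log_mul (pow_pos (div_pos (by linarith) hcx) 2).ne' hξ.ne', log_pow]
  push_cast
  ring

end NodeField

theorem nongeometric_nodes_euler_scheme_general (n : ℕ) (hn : 1 ≤ n)
    (c κ a : ℝ) (hκ : 0 < κ) (ha : 0 < a)
    (ξ : ℕ → ℝ) (hξ1 : ξ 1 = a)
    (hrec : ∀ i, 1 ≤ i → i < n →
      ξ (i + 1) = ((c + ξ i ^ (κ / (n : ℝ))) / (c - ξ i ^ (κ / (n : ℝ)))) ^ 2 * ξ i)
    (hpos : ∀ i, 1 ≤ i → i ≤ n → 0 < ξ i)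
    (hlt : ∀ i, 1 ≤ i → i ≤ n → ξ i ^ (κ / (n : ℝ)) < c) :
    (∀ i, 1 ≤ i → i < n →
      (1 / (n : ℝ)) * Real.log (ξ (i + 1)) =
        (1 / (n : ℝ)) * Real.log (ξ i) +
          (2 / (n : ℝ)) * Real.log (1 +
            2 * Real.exp (κ * ((1 / (n : ℝ)) * Real.log (ξ i))) /
              (c - Real.exp (κ * ((1 / (n : ℝ)) * Real.log (ξ i)))))) ∧
    (a ≤ 1 → ∀ ηs : ℝ → ℝ, ηs 0 = 0 →
      (∀ t ∈ Set.Icc (0:ℝ) 1, Real.exp (κ * ηs t) < c) →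
      (∀ t ∈ Set.Icc (0:ℝ) 1, HasDerivAt ηs
        (2 * Real.log (1 + 2 * Real.exp (κ * ηs t) / (c - Real.exp (κ * ηs t)))) t) →
      (1 / (n : ℝ)) * Real.log (ξ n) ≤ ηs 1) := by
  have hn₀ : (0 : ℝ) < n := by exact_mod_cast hn
  have hexp : ∀ i, 1 ≤ i → i ≤ n → exp (κ * ((1 / n) * log (ξ i))) = ξ i ^ (κ / n) :=
    fun i h₁ h₂ => by rw [rpow_def_of_pos (hpos i h₁ h₂)]; ring_nf
  have euler : ∀ i, 1 ≤ i → i < n → (1 / n) * log (ξ (i + 1)) =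
      (1 / n) * log (ξ i) + (2 / n) * log (1 + 2 * exp (κ * ((1 / n) * log (ξ i))) /
        (c - exp (κ * ((1 / n) * log (ξ i))))) := fun i h₁ h₂ => by
    rw [hexp i h₁ h₂.le, hrec i h₁ h₂,
      log_sq_div_mul (rpow_pos_of_pos (hpos i h₁ h₂.le) _) (hlt i h₁ h₂.le) (hpos i h₁ h₂.le)]
    ring
  refine ⟨euler, fun ha₁ ηs hη₀ hηS hηs => ?_⟩
  have hend : (n : ℝ) * (1 / n) = 1 := mul_one_div_cancel hn₀.ne'
  have hstart : ((1 : ℕ) : ℝ) * (1 / n) ∈ Icc (0 : ℝ) 1 :=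
    ⟨by positivity, by rw [Nat.cast_one, one_mul, div_le_one hn₀]; exact_mod_cast hn⟩
  have hIcc : Icc (((1 : ℕ) : ℝ) * (1 / n)) (n * (1 / n)) ⊆ Icc 0 1 := by
    rw [hend]; exact Icc_subset_Icc hstart.1 le_rfl
  have hinit : (1 / n) * log (ξ 1) ≤ ηs (((1 : ℕ) : ℝ) * (1 / n)) := calc
    (1 / n) * log (ξ 1) ≤ 0 :=
      mul_nonpos_of_nonneg_of_nonpos (by positivity) (hξ1 ▸ log_nonpos ha.le ha₁)
    _ = ηs 0 := hη₀.symm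
    _ ≤ ηs (((1 : ℕ) : ℝ) * (1 / n)) :=
      monotoneOn_of_hasDerivAt_nonneg hηs (fun t ht => nodeField_nonneg (hηS t ht))
        (left_mem_Icc.2 zero_le_one) hstart hstart.1
  have := euler_le_of_hasDerivAt_comp (v := nodeField c κ) (S := {y | exp (κ * y) < c})
    (x := fun i => (1 / n) * log (ξ i)) (by positivity) hn (nodeField_monotoneOn hκ.le)
    (fun _ => nodeField_nonneg) (fun t ht => hηs t (hIcc ht)) (fun t ht => hηS t (hIcc ht))
    (fun k h₁ h₂ => show exp _ < c from hexp k h₁ h₂.le ▸ hlt k h₁ h₂.le)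
    (fun k h₁ h₂ => by rw [euler k h₁ h₂, nodeField]; ring) hinit
  rwa [hend] at this

/-- The logarithms `η_i = (1/n) log ξ_i` of the non-geometric Gaussian nodes satisfy an
Euler-scheme recursion for the ODE `η' = 2 log(1 + 2e^{κη}/(c - e^{κη}))`, and if `a ≤ 1`
the Euler iterates are dominated by any solution of the ODE started at `0`. -/
theorem nongeometric_nodes_euler_scheme (n : ℕ) (hn : 1 ≤ n)
    (c κ a : ℝ) (hc : 1 < c) (hκ : 0 < κ) (ha : 0 < a)
    (ξ : ℕ → ℝ) (hξ1 : ξ 1 = a)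
    (hrec : ∀ i, 1 ≤ i → i < n →
      ξ (i + 1) = ((c + ξ i ^ (κ / (n : ℝ))) / (c - ξ i ^ (κ / (n : ℝ)))) ^ 2 * ξ i)
    (hpos : ∀ i, 1 ≤ i → i ≤ n → 0 < ξ i)
    (hlt : ∀ i, 1 ≤ i → i ≤ n → ξ i ^ (κ / (n : ℝ)) < c) :
    (∀ i, 1 ≤ i → i < n →
      (1 / (n : ℝ)) * Real.log (ξ (i + 1)) =
        (1 / (n : ℝ)) * Real.log (ξ i) +
          (2 / (n : ℝ)) * Real.log (1 +
            2 * Real.exp (κ * ((1 / (n : ℝ)) * Real.log (ξ i))) /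
              (c - Real.exp (κ * ((1 / (n : ℝ)) * Real.log (ξ i)))))) ∧
    (a ≤ 1 → ∀ ηs : ℝ → ℝ, ηs 0 = 0 →
      (∀ t ∈ Set.Icc (0:ℝ) 1, Real.exp (κ * ηs t) < c) →
      (∀ t ∈ Set.Icc (0:ℝ) 1, HasDerivAt ηs
        (2 * Real.log (1 + 2 * Real.exp (κ * ηs t) / (c - Real.exp (κ * ηs t)))) t) →
      (1 / (n : ℝ)) * Real.log (ξ n) ≤ ηs 1) :=
  nongeometric_nodes_euler_scheme_general n hn c κ a hκ ha ξ hξ1 hrec hpos hlt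
end
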